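/- arXiv:math/0411228 — 4 statements merged into one kernel-verified Lean document; each statement's English description precedes it below -/
import Mathlib

section
/- Let A = R/I be a level standard graded artinian algebra of type 2 with socle degree e, where R = k[x_1,…,x_r]. Suppose J_1 and J_2 are homogeneous ideals of A with J_1 ∩ J_2 = 0 such that A/J_1 and A/J_2 are Gorenstein standard graded artinian algebras of socle degree e. For 0 ≤ d ≤ e set h''_d = dim_k (A/(J_1+J_2))_d, h'_d = dim_k (A/J_1)_d − h''_d and h'''_d = dim_k (A/J_2)_d − h''_d. Then (1) dim_k A_d = h'_d + h''_d + h'''_d for all 0 ≤ d ≤ e; and (2) each of the three sequences (h''_d)_{0≤d≤e}, (h'_{e−d})_{0≤d≤e} and (h'''_{e−d})_{0≤d≤e} is the Hilbert function (in degrees 0,…,e, and zero in degrees > e) of some graded quotient of A by a homogeneous ideal. -/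
open MvPolynomial

/-- The degree-`d` graded piece of the quotient `k[x_1,…,x_r]/I`, realized as the image of
the space of homogeneous polynomials of degree `d` in the quotient. -/
noncomputable def quotPiece (k : Type) [Field k] (r : ℕ)
    (I : Ideal (MvPolynomial (Fin r) k)) (d : ℕ) :
    Submodule k (MvPolynomial (Fin r) k ⧸ I) :=
  (homogeneousSubmodule (Fin r) k d).map (Ideal.Quotient.mkₐ k I).toLinearMap

/-- The Hilbert function of the quotient `k[x_1,…,x_r]/I`. -/
noncomputable def hilb (k : Type) [Field k] (r : ℕ)
    (I : Ideal (MvPolynomial (Fin r) k)) (d : ℕ) : ℕ :=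
  Module.finrank k (quotPiece k r I d)

/-- `A = k[x_1,…,x_r]/I` is a level standard graded artinian algebra of socle degree `e` and
type `t`: the ideal `I` is homogeneous, the Hilbert function of `A` vanishes in degrees `> e`
and equals `t` in degree `e`, and the socle of `A` (the annihilator of the irrelevant maximal
ideal) coincides with the degree-`e` graded piece `A_e`. -/
def IsLevelQuot (k : Type) [Field k] (r e t : ℕ)
    (I : Ideal (MvPolynomial (Fin r) k)) : Prop :=
  (∀ f ∈ I, ∀ d, homogeneousComponent d f ∈ I) ∧
  (∀ d, e < d → hilb k r I d = 0) ∧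
  hilb k r I e = t ∧
  {a : MvPolynomial (Fin r) k ⧸ I | ∀ i, a * Ideal.Quotient.mk I (X i) = 0} =
    (quotPiece k r I e : Set (MvPolynomial (Fin r) k ⧸ I))

/-! Part (1) is inclusion–exclusion for the graded pieces of the homogeneous ideals `I₁ ⊓ I₂ = I`
and `I₁ ⊔ I₂`, and `h''` is realised by `I₁ ⊔ I₂` itself. For the reversed sequences take
`C = I₁ : (I₁ ⊔ I₂)`. Since `R/I₁` is Gorenstein of socle degree `e`, multiplication
`(R/I₁)_d × (R/I₁)_{e-d} → (R/I₁)_e ≅ k` is nondegenerate, and the left kernel of its restriction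
to `(R/I₁)_d × ((I₁ ⊔ I₂)/I₁)_{e-d}` is `(C/I₁)_d`. Hence
`dim (R/C)_d = dim ((I₁ ⊔ I₂)/I₁)_{e-d} = h'_{e-d}`, and symmetrically for `h'''`. -/

theorem Submodule.finrank_map_add_finrank_inf_ker {K V W : Type*} [Field K]
    [AddCommGroup V] [Module K V] [AddCommGroup W] [Module K W] (f : V →ₗ[K] W)
    (S : Submodule K V) [Module.Finite K S] :
    Module.finrank K (S.map f) + Module.finrank K (S ⊓ LinearMap.ker f : Submodule K V) =
      Module.finrank K S := by
  have hker : (LinearMap.ker f).comap S.subtype = (S ⊓ LinearMap.ker f).comap S.subtype := by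
    simp
  rw [← LinearMap.finrank_range_add_finrank_ker (f.domRestrict S), LinearMap.range_domRestrict,
    LinearMap.ker_domRestrict, hker, (Submodule.comapSubtypeEquivOfLe inf_le_left).finrank_eq]

theorem LinearMap.finrank_ker_add_finrank_of_injective_flip {K V W : Type*} [Field K]
    [AddCommGroup V] [Module K V] [AddCommGroup W] [Module K W] [FiniteDimensional K V]
    [FiniteDimensional K W] {B : V →ₗ[K] W →ₗ[K] K} (hB : Function.Injective B.flip) :
    Module.finrank K (LinearMap.ker B) + Module.finrank K W = Module.finrank K V := by
  rw [← B.finrank_range_add_finrank_ker,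
    LinearMap.range_eq_top.mpr (flip_injective_iff₁.mp hB), finrank_top, Subspace.dual_finrank_eq,
    add_comm]

theorem Submodule.exists_bilinear_eq_zero_iff_mul_eq_zero {K A : Type*} [Field K] [Ring A]
    [Algebra K A] {V W P : Submodule K A} (hP : Module.finrank K P = 1)
    (hVW : ∀ x ∈ V, ∀ z ∈ W, x * z ∈ P) :
    ∃ β : V →ₗ[K] W →ₗ[K] K, ∀ x z, β x z = 0 ↔ (x : A) * z = 0 := by
  have : Module.Finite K P := Module.finite_of_finrank_eq_succ hP
  let φ : K ≃ₗ[K] P := LinearEquiv.ofFinrankEq K P (by simp [hP])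
  let i : K →ₗ[K] A := P.subtype ∘ₗ φ.toLinearMap
  have hi : Function.Injective i := P.injective_subtype.comp φ.injective
  have hrange (x : V) (z : W) :
      (LinearMap.mul K A).domRestrict₁₂ V W x z ∈ LinearMap.range i :=
    ⟨φ.symm ⟨_, hVW x x.2 z z.2⟩, by simp [i, LinearMap.domRestrict₁₂_apply]⟩
  refine ⟨LinearMap.codRestrict₂ _ i hi hrange, fun x z => ?_⟩
  rw [← map_eq_zero_iff i hi, LinearMap.codRestrict₂_apply, LinearMap.domRestrict₁₂_apply,
    LinearMap.mul_apply']

theorem Ideal.Quotient.ker_mkₐ_toLinearMap {K A : Type*} [CommRing K] [CommRing A]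
    [Algebra K A] (J : Ideal A) :
    LinearMap.ker (Ideal.Quotient.mkₐ K J).toLinearMap = J.restrictScalars K := by
  ext f
  simp [Ideal.Quotient.eq_zero_iff_mem]

attribute [local instance] MvPolynomial.gradedAlgebra

section GradedQuotient

variable {k : Type} [Field k] {r : ℕ}

local notation "R" => MvPolynomial (Fin r) k
local notation "𝒜" => homogeneousSubmodule (Fin r) k

theorem MvPolynomial.coe_decompose_eq_homogeneousComponent (f : R) (d : ℕ) :
    (DirectSum.decompose 𝒜 f d : R) = homogeneousComponent d f :=
  decomposition.decompose'_apply f d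

theorem Ideal.isHomogeneous_iff_homogeneousComponent_mem (J : Ideal R) :
    J.IsHomogeneous 𝒜 ↔ ∀ f ∈ J, ∀ d, homogeneousComponent d f ∈ J := by
  simp only [Ideal.IsHomogeneous, Submodule.IsHomogeneous, DirectSum.SetLike.IsHomogeneous,
    coe_decompose_eq_homogeneousComponent]
  exact ⟨fun h f hf d => h d hf, fun h d f hf => h f hf d⟩

theorem MvPolynomial.homogeneousComponent_add_mul_of_isHomogeneous {f g : R} {j : ℕ}
    (hg : g.IsHomogeneous j) (d : ℕ) :
    homogeneousComponent (d + j) (f * g) = homogeneousComponent d f * g := by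
  rw [← coe_decompose_eq_homogeneousComponent, ← coe_decompose_eq_homogeneousComponent,
    DirectSum.coe_decompose_mul_of_right_mem 𝒜 (d + j) hg,
    if_pos (Nat.le_add_left j d), Nat.add_sub_cancel]

theorem Ideal.IsHomogeneous.colon {I K : Ideal R} (hI : I.IsHomogeneous 𝒜)
    (hK : K.IsHomogeneous 𝒜) : (I.colon K).IsHomogeneous 𝒜 := by
  rw [Ideal.isHomogeneous_iff_homogeneousComponent_mem]
  intro f hf d
  rw [Submodule.mem_colon]
  intro g hg
  rw [← sum_homogeneousComponent g, smul_eq_mul, Finset.mul_sum]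
  refine I.sum_mem fun j _ => ?_
  rw [← homogeneousComponent_add_mul_of_isHomogeneous (homogeneousComponent_isHomogeneous j g)]
  exact homogeneousComponent_mem_of_mem hI
    (Submodule.mem_colon.mp hf _ (homogeneousComponent_mem_of_mem hK hg j)) _

noncomputable def idealPiece (J : Ideal R) (d : ℕ) : Submodule k R :=
  𝒜 d ⊓ J.restrictScalars k

noncomputable def imagePiece (I K : Ideal R) (d : ℕ) : Submodule k (R ⧸ I) :=
  (idealPiece K d).map (Ideal.Quotient.mkₐ k I).toLinearMap

instance (d : ℕ) : Module.Finite k (𝒜 d) :=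
  Module.Finite.iff_fg.mpr (homogeneousSubmodule_fg _ _ d)

instance (J : Ideal R) (d : ℕ) : Module.Finite k (idealPiece J d) :=
  Submodule.finiteDimensional_of_le inf_le_left

instance (J : Ideal R) (d : ℕ) : Module.Finite k (quotPiece k r J d) :=
  Module.Finite.map _ _

instance (I K : Ideal R) (d : ℕ) : Module.Finite k (imagePiece I K d) :=
  Module.Finite.map _ _

theorem hilb_add_finrank_idealPiece (J : Ideal R) (d : ℕ) :
    hilb k r J d + Module.finrank k (idealPiece J d) = Module.finrank k (𝒜 d) := by
  have := Submodule.finrank_map_add_finrank_inf_ker (Ideal.Quotient.mkₐ k J).toLinearMap (𝒜 d)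
  rwa [Ideal.Quotient.ker_mkₐ_toLinearMap] at this

theorem idealPiece_mono {I J : Ideal R} (h : I ≤ J) (d : ℕ) : idealPiece I d ≤ idealPiece J d :=
  inf_le_inf_left _ h

theorem hilb_le_of_le {I J : Ideal R} (h : I ≤ J) (d : ℕ) : hilb k r J d ≤ hilb k r I d := by
  have := Submodule.finrank_mono (idealPiece_mono h d)
  have := hilb_add_finrank_idealPiece I d
  have := hilb_add_finrank_idealPiece J d
  omega

theorem finrank_imagePiece_add_hilb {I K : Ideal R} (h : I ≤ K) (d : ℕ) :
    Module.finrank k (imagePiece I K d) + hilb k r K d = hilb k r I d := by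
  have hinf : idealPiece K d ⊓ LinearMap.ker (Ideal.Quotient.mkₐ k I).toLinearMap =
      idealPiece I d := by
    rw [Ideal.Quotient.ker_mkₐ_toLinearMap, idealPiece, inf_assoc,
      inf_eq_right.mpr (show I.restrictScalars k ≤ K.restrictScalars k from h)]
    rfl
  have := Submodule.finrank_map_add_finrank_inf_ker (Ideal.Quotient.mkₐ k I).toLinearMap
    (idealPiece K d)
  rw [hinf] at this
  have := hilb_add_finrank_idealPiece I d
  have := hilb_add_finrank_idealPiece K d
  unfold imagePiece
  omega

theorem idealPiece_sup {I J : Ideal R} (hI : I.IsHomogeneous 𝒜) (hJ : J.IsHomogeneous 𝒜)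
    (d : ℕ) : idealPiece (I ⊔ J) d = idealPiece I d ⊔ idealPiece J d := by
  refine le_antisymm ?_ (sup_le (idealPiece_mono le_sup_left d) (idealPiece_mono le_sup_right d))
  rintro f ⟨hf, hfIJ⟩
  obtain ⟨g, hg, h, hh, rfl⟩ := Submodule.mem_sup.mp hfIJ
  have hcomp : homogeneousComponent d (g + h) = g + h := by
    rw [homogeneousComponent_of_mem hf, if_pos rfl]
  rw [← hcomp, map_add]
  exact Submodule.add_mem_sup
    ⟨homogeneousComponent_mem d g, homogeneousComponent_mem_of_mem hI hg d⟩
    ⟨homogeneousComponent_mem d h, homogeneousComponent_mem_of_mem hJ hh d⟩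

theorem idealPiece_inf (I J : Ideal R) (d : ℕ) :
    idealPiece (I ⊓ J) d = idealPiece I d ⊓ idealPiece J d := by
  rw [idealPiece, idealPiece, idealPiece, Submodule.restrictScalars_inf, inf_inf_distrib_left]

theorem hilb_inf_add_hilb_sup {I J : Ideal R} (hI : I.IsHomogeneous 𝒜)
    (hJ : J.IsHomogeneous 𝒜) (d : ℕ) :
    hilb k r (I ⊓ J) d + hilb k r (I ⊔ J) d = hilb k r I d + hilb k r J d := by
  have := Submodule.finrank_sup_add_finrank_inf_eq (idealPiece I d) (idealPiece J d)
  rw [← idealPiece_sup hI hJ, ← idealPiece_inf] at this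
  have := hilb_add_finrank_idealPiece I d
  have := hilb_add_finrank_idealPiece J d
  have := hilb_add_finrank_idealPiece (I ⊓ J) d
  have := hilb_add_finrank_idealPiece (I ⊔ J) d
  omega

theorem mem_quotPiece {J : Ideal R} {d : ℕ} {x : R ⧸ J} :
    x ∈ quotPiece k r J d ↔ ∃ f : R, f.IsHomogeneous d ∧ Ideal.Quotient.mk J f = x :=
  Iff.rfl

theorem mk_mem_quotPiece (J : Ideal R) {f : R} {d : ℕ} (hf : f.IsHomogeneous d) :
    Ideal.Quotient.mk J f ∈ quotPiece k r J d :=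
  ⟨f, hf, rfl⟩

theorem mul_mem_quotPiece {J : Ideal R} {i j : ℕ} {x y : R ⧸ J}
    (hx : x ∈ quotPiece k r J i) (hy : y ∈ quotPiece k r J j) :
    x * y ∈ quotPiece k r J (i + j) := by
  obtain ⟨f, hf, rfl⟩ := hx
  obtain ⟨g, hg, rfl⟩ := hy
  exact ⟨f * g, hf.mul hg, map_mul (Ideal.Quotient.mk J) f g⟩

theorem mem_imagePiece {I K : Ideal R} {d : ℕ} {x : R ⧸ I} :
    x ∈ imagePiece I K d ↔ ∃ f : R, (f.IsHomogeneous d ∧ f ∈ K) ∧ Ideal.Quotient.mk I f = x :=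
  Iff.rfl

theorem imagePiece_le_quotPiece (I K : Ideal R) (d : ℕ) :
    imagePiece I K d ≤ quotPiece k r I d :=
  Submodule.map_mono inf_le_left

theorem eq_zero_of_mem_quotPiece_of_ne {J : Ideal R} (hJ : J.IsHomogeneous 𝒜) {i j : ℕ}
    (hij : i ≠ j) {x : R ⧸ J} (hi : x ∈ quotPiece k r J i) (hj : x ∈ quotPiece k r J j) :
    x = 0 := by
  obtain ⟨f, hf, rfl⟩ := hi
  obtain ⟨g, hg, hgf⟩ := hj
  have hcomp := homogeneousComponent_mem_of_mem hJ (Ideal.Quotient.eq.mp hgf) i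
  rw [map_sub, homogeneousComponent_of_mem hg, homogeneousComponent_of_mem hf, if_neg hij,
    if_pos rfl, zero_sub, neg_mem_iff] at hcomp
  exact Ideal.Quotient.eq_zero_iff_mem.mpr hcomp

namespace IsLevelQuot

variable {e t : ℕ}

theorem isHomogeneous {I : Ideal R} (hI : IsLevelQuot k r e t I) : I.IsHomogeneous 𝒜 :=
  (Ideal.isHomogeneous_iff_homogeneousComponent_mem I).mpr hI.1

theorem hilb_eq_zero_of_le {I C : Ideal R} (hI : IsLevelQuot k r e t I) (h : I ≤ C) {d : ℕ}
    (hd : e < d) : hilb k r C d = 0 :=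
  Nat.eq_zero_of_le_zero (hI.2.1 d hd ▸ hilb_le_of_le h d)

theorem exists_mul_ne_zero {I : Ideal R} (hI : IsLevelQuot k r e t I) (n : ℕ) :
    ∀ d, d + n = e → ∀ x ∈ quotPiece k r I d, x ≠ 0 →
      ∃ y ∈ quotPiece k r I n, x * y ≠ 0 := by
  induction n with
  | zero => exact fun d _ x _ hx => ⟨1, mk_mem_quotPiece I (isHomogeneous_one _ _), by simpa⟩
  | succ n ih =>
    intro d hd x hx hx0
    obtain ⟨i, hi⟩ : ∃ i, x * Ideal.Quotient.mk I (X i) ≠ 0 := by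
      by_contra! hsoc
      have hxe : x ∈ quotPiece k r I e := by
        rw [← SetLike.mem_coe, ← hI.2.2.2]
        exact hsoc
      exact hx0 (eq_zero_of_mem_quotPiece_of_ne hI.isHomogeneous (by omega) hx hxe)
    have hXi := mk_mem_quotPiece I (isHomogeneous_X k i)
    obtain ⟨y, hy, hxy⟩ := ih (d + 1) (by omega) _ (mul_mem_quotPiece hx hXi) hi
    refine ⟨_, add_comm n 1 ▸ mul_mem_quotPiece hXi hy, ?_⟩
    rwa [← mul_assoc]

theorem mul_imagePiece_eq_zero_iff {I K : Ideal R} (hI : IsLevelQuot k r e t I)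
    (hK : K.IsHomogeneous 𝒜) {d : ℕ} {x : R ⧸ I} (hx : x ∈ quotPiece k r I d) :
    (∀ z ∈ imagePiece I K (e - d), x * z = 0) ↔ x ∈ imagePiece I (I.colon K) d := by
  constructor
  · intro hx0
    obtain ⟨f, hf, rfl⟩ := mem_quotPiece.mp hx
    have hhom (j : ℕ) (g : R) (hg : g ∈ K) (hgj : g.IsHomogeneous j) :
        Ideal.Quotient.mk I f * Ideal.Quotient.mk I g = 0 := by
      have hfg := mul_mem_quotPiece (mk_mem_quotPiece I hf) (mk_mem_quotPiece I hgj)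
      by_cases hej : e < d + j
      · rwa [Submodule.finrank_eq_zero.mp (hI.2.1 _ hej)] at hfg
      by_contra hne
      -- push the nonzero product `f g` up into the socle degree `e`; then `g y ∈ K_{e-d}`
      obtain ⟨_, hy', hxy⟩ := hI.exists_mul_ne_zero (e - (d + j)) (d + j) (by omega) _ hfg hne
      obtain ⟨y, hy, rfl⟩ := mem_quotPiece.mp hy'
      refine hxy ?_
      rw [mul_assoc, ← map_mul]
      refine hx0 _ (mem_imagePiece.mpr ⟨g * y, ⟨?_, K.mul_mem_right y hg⟩, rfl⟩)
      simpa [show j + (e - (d + j)) = e - d by omega] using hgj.mul hy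
    refine mem_imagePiece.mpr ⟨f, ⟨hf, Submodule.mem_colon.mpr fun g hg => ?_⟩, rfl⟩
    rw [← Ideal.Quotient.eq_zero_iff_mem, smul_eq_mul, ← sum_homogeneousComponent g,
      Finset.mul_sum, map_sum]
    refine Finset.sum_eq_zero fun j _ => ?_
    rw [map_mul]
    exact hhom j _ (homogeneousComponent_mem_of_mem hK hg j)
      (homogeneousComponent_isHomogeneous j g)
  · intro hx z hz
    obtain ⟨f, ⟨-, hf⟩, rfl⟩ := mem_imagePiece.mp hx
    obtain ⟨g, ⟨-, hg⟩, rfl⟩ := mem_imagePiece.mp hz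
    rw [← map_mul, Ideal.Quotient.eq_zero_iff_mem]
    exact Submodule.mem_colon.mp hf g hg

theorem finrank_imagePiece_colon_add_finrank_imagePiece {I K : Ideal R}
    (hI : IsLevelQuot k r e 1 I) (hK : K.IsHomogeneous 𝒜) {d : ℕ} (hd : d ≤ e) :
    Module.finrank k (imagePiece I (I.colon K) d) + Module.finrank k (imagePiece I K (e - d)) =
      hilb k r I d := by
  obtain ⟨β, hβ⟩ := Submodule.exists_bilinear_eq_zero_iff_mul_eq_zero
    (V := quotPiece k r I d) (W := imagePiece I K (e - d)) hI.2.2.1 fun x hx z hz =>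
      Nat.add_sub_cancel' hd ▸ mul_mem_quotPiece hx (imagePiece_le_quotPiece I K _ hz)
  have hflip : Function.Injective β.flip := by
    rw [← LinearMap.ker_eq_bot, Submodule.eq_bot_iff]
    intro z hz
    by_contra hz0
    obtain ⟨y, hy, hyz⟩ := hI.exists_mul_ne_zero d (e - d) (by omega) z
      (imagePiece_le_quotPiece I K _ z.2) (by simpa using hz0)
    rw [mul_comm] at hyz
    exact hyz ((hβ ⟨y, hy⟩ z).mp (LinearMap.congr_fun hz ⟨y, hy⟩))
  have hker :
      LinearMap.ker β = (imagePiece I (I.colon K) d).comap (quotPiece k r I d).subtype := by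
    ext x
    rw [LinearMap.mem_ker, Submodule.mem_comap, Submodule.coe_subtype,
      ← mul_imagePiece_eq_zero_iff hI hK x.2]
    exact ⟨fun h z hz => (hβ x ⟨z, hz⟩).mp (LinearMap.congr_fun h ⟨z, hz⟩),
      fun h => LinearMap.ext fun z => (hβ x z).mpr (h z z.2)⟩
  show _ = Module.finrank k (quotPiece k r I d)
  rw [← LinearMap.finrank_ker_add_finrank_of_injective_flip hflip, hker,
    (Submodule.comapSubtypeEquivOfLe (imagePiece_le_quotPiece I _ d)).finrank_eq]

theorem hilb_colon_add_hilb {I K : Ideal R} (hI : IsLevelQuot k r e 1 I)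
    (hK : K.IsHomogeneous 𝒜) (hIK : I ≤ K) {d : ℕ} (hd : d ≤ e) :
    hilb k r (I.colon K) d + hilb k r K (e - d) = hilb k r I (e - d) := by
  have := hI.finrank_imagePiece_colon_add_finrank_imagePiece hK hd
  have := finrank_imagePiece_add_hilb (Ideal.le_colon (I := I) (S := K)) d
  have := finrank_imagePiece_add_hilb hIK (e - d)
  omega

end IsLevelQuot

end GradedQuotient

theorem stmt1_general (k : Type) [Field k] (r e : ℕ)
    (I I1 I2 : Ideal (MvPolynomial (Fin r) k))
    (hle1 : I ≤ I1) (hle2 : I ≤ I2) (hmeet : I1 ⊓ I2 = I)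
    (hG1 : IsLevelQuot k r e 1 I1) (hG2 : IsLevelQuot k r e 1 I2)
    (h'' h' h''' : ℕ → ℤ)
    (hdef'' : ∀ d, h'' d = hilb k r (I1 + I2) d)
    (hdef' : ∀ d, h' d = (hilb k r I1 d : ℤ) - h'' d)
    (hdef''' : ∀ d, h''' d = (hilb k r I2 d : ℤ) - h'' d) :
    (∀ d ≤ e, (hilb k r I d : ℤ) = h' d + h'' d + h''' d) ∧
    (∃ C : Ideal (MvPolynomial (Fin r) k), I ≤ C ∧
        (∀ f ∈ C, ∀ d, homogeneousComponent d f ∈ C) ∧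
        (∀ d ≤ e, (hilb k r C d : ℤ) = h'' d) ∧ (∀ d, e < d → hilb k r C d = 0)) ∧
    (∃ C : Ideal (MvPolynomial (Fin r) k), I ≤ C ∧
        (∀ f ∈ C, ∀ d, homogeneousComponent d f ∈ C) ∧
        (∀ d ≤ e, (hilb k r C d : ℤ) = h' (e - d)) ∧ (∀ d, e < d → hilb k r C d = 0)) ∧
    (∃ C : Ideal (MvPolynomial (Fin r) k), I ≤ C ∧
        (∀ f ∈ C, ∀ d, homogeneousComponent d f ∈ C) ∧
        (∀ d ≤ e, (hilb k r C d : ℤ) = h''' (e - d)) ∧ (∀ d, e < d → hilb k r C d = 0)) := by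
  have hom12 := hG1.isHomogeneous.sup hG2.isHomogeneous
  have homColon1 := hG1.isHomogeneous.colon hom12
  have homColon2 := hG2.isHomogeneous.colon hom12
  simp only [← Ideal.isHomogeneous_iff_homogeneousComponent_mem]
  simp only [Submodule.add_eq_sup] at hdef''
  refine ⟨fun d _ => ?_,
    ⟨I1 ⊔ I2, hle1.trans le_sup_left, hom12, fun d _ => (hdef'' d).symm,
      fun d => hG1.hilb_eq_zero_of_le le_sup_left⟩,
    ⟨I1.colon ↑(I1 ⊔ I2), hle1.trans Ideal.le_colon, homColon1, fun d hd => ?_,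
      fun d => hG1.hilb_eq_zero_of_le Ideal.le_colon⟩,
    ⟨I2.colon ↑(I1 ⊔ I2), hle2.trans Ideal.le_colon, homColon2, fun d hd => ?_,
      fun d => hG2.hilb_eq_zero_of_le Ideal.le_colon⟩⟩
  · have := hilb_inf_add_hilb_sup hG1.isHomogeneous hG2.isHomogeneous d
    rw [hmeet] at this
    rw [hdef', hdef''', hdef'']
    omega
  · have := hG1.hilb_colon_add_hilb hom12 le_sup_left hd
    rw [hdef', hdef'']
    omega
  · have := hG2.hilb_colon_add_hilb hom12 le_sup_right hd
    rw [hdef''', hdef'']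
    omega

/-- Theorem 2.3 (decomposition of the `h`-vector of a level algebra of type 2): if `A = R/I`
is level of type 2 and socle degree `e`, and `I₁, I₂ ⊇ I` give homogeneous ideals `J₁, J₂` of
`A` with `J₁ ∩ J₂ = 0` and with `A/J₁ = R/I₁`, `A/J₂ = R/I₂` Gorenstein of socle degree `e`,
then `h = h' + h'' + h'''` where `h''` is the Hilbert function of `A/(J₁+J₂)` and
`h' = h(A/J₁) - h''`, `h''' = h(A/J₂) - h''`; moreover `h''` and the reverses of `h'` and
`h'''` are Hilbert functions of graded quotients of `A`. -/
theorem stmt1 (k : Type) [Field k] [CharZero k] (r e : ℕ)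
    (I I1 I2 : Ideal (MvPolynomial (Fin r) k))
    (hI : IsLevelQuot k r e 2 I)
    (hle1 : I ≤ I1) (hle2 : I ≤ I2) (hmeet : I1 ⊓ I2 = I)
    (hG1 : IsLevelQuot k r e 1 I1) (hG2 : IsLevelQuot k r e 1 I2)
    (h'' h' h''' : ℕ → ℤ)
    (hdef'' : ∀ d, h'' d = hilb k r (I1 + I2) d)
    (hdef' : ∀ d, h' d = (hilb k r I1 d : ℤ) - h'' d)
    (hdef''' : ∀ d, h''' d = (hilb k r I2 d : ℤ) - h'' d) :
    (∀ d ≤ e, (hilb k r I d : ℤ) = h' d + h'' d + h''' d) ∧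
    (∃ C : Ideal (MvPolynomial (Fin r) k), I ≤ C ∧
        (∀ f ∈ C, ∀ d, homogeneousComponent d f ∈ C) ∧
        (∀ d ≤ e, (hilb k r C d : ℤ) = h'' d) ∧ (∀ d, e < d → hilb k r C d = 0)) ∧
    (∃ C : Ideal (MvPolynomial (Fin r) k), I ≤ C ∧
        (∀ f ∈ C, ∀ d, homogeneousComponent d f ∈ C) ∧
        (∀ d ≤ e, (hilb k r C d : ℤ) = h' (e - d)) ∧ (∀ d, e < d → hilb k r C d = 0)) ∧
    (∃ C : Ideal (MvPolynomial (Fin r) k), I ≤ C ∧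
        (∀ f ∈ C, ∀ d, homogeneousComponent d f ∈ C) ∧
        (∀ d ≤ e, (hilb k r C d : ℤ) = h''' (e - d)) ∧ (∀ d, e < d → hilb k r C d = 0)) :=
  stmt1_general k r e I I1 I2 hle1 hle2 hmeet hG1 hG2 h'' h' h''' hdef'' hdef' hdef'''
end

section
/- For all integers r ≥ 2, e ≥ 2 and a with r ≤ a ≤ 2r and a ≤ C(r+e−2, e−1), there exists a level standard graded artinian algebra of type 2, codimension r and socle degree e over k whose h-vector (1, r, …, h_{e-1}, 2) satisfies h_{e-1} = a. -/
open MvPolynomial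

set_option linter.unusedSectionVars false
set_option linter.unusedVariables false
set_option linter.unreachableTactic false
set_option linter.unusedTactic false
set_option maxHeartbeats 1000000

namespace Stmt3Aux
open Finsupp


variable {k : Type} [Field k] {σ : Type} [DecidableEq σ]

/-- Contraction (apolarity) action. -/
noncomputable def cont (f g : MvPolynomial σ k) : MvPolynomial σ k :=
  ∑ α ∈ f.support, ∑ β ∈ g.support,
    if α ≤ β then monomial (β - α) (coeff α f * coeff β g) else 0

lemma le_and_sub_eq {α β γ : σ →₀ ℕ} : (α ≤ β ∧ β - α = γ) ↔ β = α + γ := by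
  constructor
  · rintro ⟨h, rfl⟩
    exact (add_tsub_cancel_of_le h).symm
  · rintro rfl
    exact ⟨le_add_right le_rfl, add_tsub_cancel_left α γ⟩

lemma coeff_cont (γ : σ →₀ ℕ) (f g : MvPolynomial σ k) :
    coeff γ (cont f g) = ∑ α ∈ f.support, coeff α f * coeff (α + γ) g := by
  unfold cont
  rw [coeff_sum]
  refine Finset.sum_congr rfl fun α _ => ?_
  rw [coeff_sum]
  have h : ∀ β ∈ g.support,
      coeff γ (if α ≤ β then monomial (β - α) (coeff α f * coeff β g) else 0)
        = if β = α + γ then coeff α f * coeff β g else 0 := by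
    intro β _
    by_cases hb : β = α + γ
    · subst hb
      rw [if_pos (le_and_sub_eq.mpr rfl).1, coeff_monomial,
        if_pos (le_and_sub_eq.mpr rfl).2, if_pos rfl]
    · split_ifs with h1
      · rw [coeff_monomial]
        rw [if_neg]
        intro h2
        exact hb (le_and_sub_eq.mp ⟨h1, h2⟩)
      · exact coeff_zero _
  rw [Finset.sum_congr rfl h, Finset.sum_ite_eq' g.support (α + γ)]
  by_cases hm : α + γ ∈ g.support
  · rw [if_pos hm]
  · rw [if_neg hm, MvPolynomial.notMem_support_iff.mp hm, mul_zero]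

lemma coeff_cont_of_subset {s : Finset (σ →₀ ℕ)} {f : MvPolynomial σ k}
    (hs : f.support ⊆ s) (γ : σ →₀ ℕ) (g : MvPolynomial σ k) :
    coeff γ (cont f g) = ∑ α ∈ s, coeff α f * coeff (α + γ) g := by
  rw [coeff_cont]
  exact Finset.sum_subset hs (fun x _ hx => by
    rw [MvPolynomial.notMem_support_iff.mp hx, zero_mul])

lemma cont_add_left (f f' g : MvPolynomial σ k) :
    cont (f + f') g = cont f g + cont f' g := by
  apply MvPolynomial.ext
  intro γ
  rw [coeff_add, coeff_cont_of_subset (s := f.support ∪ f'.support)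
      (MvPolynomial.support_add), coeff_cont_of_subset (s := f.support ∪ f'.support)
      Finset.subset_union_left, coeff_cont_of_subset (s := f.support ∪ f'.support)
      Finset.subset_union_right, ← Finset.sum_add_distrib]
  exact Finset.sum_congr rfl fun α _ => by rw [coeff_add, add_mul]

lemma cont_smul_left (c : k) (f g : MvPolynomial σ k) :
    cont (c • f) g = c • cont f g := by
  apply MvPolynomial.ext
  intro γ
  rw [coeff_smul, coeff_cont_of_subset (s := f.support) MvPolynomial.support_smul, coeff_cont,
    smul_eq_mul, Finset.mul_sum]
  exact Finset.sum_congr rfl fun α _ => by rw [coeff_smul, smul_eq_mul, mul_assoc]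

lemma cont_zero_left (g : MvPolynomial σ k) : cont (0 : MvPolynomial σ k) g = 0 := by
  apply MvPolynomial.ext
  intro γ
  rw [coeff_cont]
  simp

lemma cont_add_right (f g g' : MvPolynomial σ k) :
    cont f (g + g') = cont f g + cont f g' := by
  apply MvPolynomial.ext
  intro γ
  rw [coeff_add, coeff_cont, coeff_cont, coeff_cont, ← Finset.sum_add_distrib]
  exact Finset.sum_congr rfl fun α _ => by rw [coeff_add, mul_add]

lemma cont_smul_right (c : k) (f g : MvPolynomial σ k) :
    cont f (c • g) = c • cont f g := by
  apply MvPolynomial.ext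
  intro γ
  rw [coeff_smul, coeff_cont, coeff_cont, smul_eq_mul, Finset.mul_sum]
  exact Finset.sum_congr rfl fun α _ => by
    rw [coeff_smul, smul_eq_mul]; ring

lemma cont_zero_right (f : MvPolynomial σ k) : cont f (0 : MvPolynomial σ k) = 0 := by
  apply MvPolynomial.ext
  intro γ
  rw [coeff_cont]
  simp

/-- Contraction as a linear map in the first argument. -/
noncomputable def contL (g : MvPolynomial σ k) : MvPolynomial σ k →ₗ[k] MvPolynomial σ k where
  toFun f := cont f g
  map_add' f f' := cont_add_left f f' g
  map_smul' c f := cont_smul_left c f g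

@[simp] lemma contL_apply (g f : MvPolynomial σ k) : contL g f = cont f g := rfl

/-- Contraction as a linear map in the second argument. -/
noncomputable def contR (f : MvPolynomial σ k) : MvPolynomial σ k →ₗ[k] MvPolynomial σ k where
  toFun g := cont f g
  map_add' g g' := cont_add_right f g g'
  map_smul' c g := cont_smul_right c f g

@[simp] lemma contR_apply (f g : MvPolynomial σ k) : contR f g = cont f g := rfl

lemma cont_monomial_left_coeff (α : σ →₀ ℕ) (c : k) (g : MvPolynomial σ k) (γ : σ →₀ ℕ) :
    coeff γ (cont (monomial α c) g) = c * coeff (α + γ) g := by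
  rw [coeff_cont_of_subset (s := {α}) support_monomial_subset, Finset.sum_singleton,
    coeff_monomial, if_pos rfl]

lemma cont_monomial (α β : σ →₀ ℕ) (c d : k) :
    cont (monomial α c) (monomial β d)
      = if α ≤ β then monomial (β - α) (c * d) else 0 := by
  by_cases h : α ≤ β
  · rw [if_pos h]
    apply MvPolynomial.ext; intro γ
    rw [cont_monomial_left_coeff, coeff_monomial, coeff_monomial]
    by_cases h2 : β = α + γ
    · rw [if_pos h2, if_pos (le_and_sub_eq.mpr h2).2]
    · rw [if_neg h2, mul_zero, if_neg (fun hh => h2 (le_and_sub_eq.mp ⟨h, hh⟩))]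
  · rw [if_neg h]
    apply MvPolynomial.ext; intro γ
    rw [cont_monomial_left_coeff, coeff_monomial, coeff_zero,
      if_neg (fun hh => h (le_and_sub_eq.mpr hh).1), mul_zero]

lemma cont_mul (f g h : MvPolynomial σ k) : cont (f * g) h = cont f (cont g h) := by
  induction f using MvPolynomial.induction_on' with
  | add p q hp hq => rw [add_mul, cont_add_left, hp, hq, cont_add_left]
  | monomial α c =>
    induction g using MvPolynomial.induction_on' with
    | add p q hp hq =>
      rw [mul_add, cont_add_left, hp, hq, cont_add_left, cont_add_right]
    | monomial β d =>
      apply MvPolynomial.ext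
      intro γ
      rw [monomial_mul, cont_monomial_left_coeff, cont_monomial_left_coeff,
        cont_monomial_left_coeff, mul_assoc]
      rw [add_assoc, add_left_comm]

lemma degree_add' (x y : σ →₀ ℕ) : (x + y).degree = x.degree + y.degree := by
  simp only [degree_eq_weight_one]
  exact map_add _ x y

lemma degree_single' (i : σ) (n : ℕ) : (single i n).degree = n := by
  by_cases h : n = 0
  · subst h; rw [single_zero, map_zero]
  · rw [Finsupp.degree_apply, support_single_ne_zero i h, Finset.sum_singleton, single_eq_same]

lemma isHomogeneous_iff {φ : MvPolynomial σ k} {m : ℕ} :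
    φ.IsHomogeneous m ↔ ∀ d, coeff d φ ≠ 0 → d.degree = m := by
  unfold IsHomogeneous IsWeightedHomogeneous
  simp only [degree_eq_weight_one, smul_eq_mul, mul_one]
  exact Iff.rfl

lemma degree_le_of_le {α β : σ →₀ ℕ} (h : α ≤ β) : α.degree ≤ β.degree := by
  have h2 := add_tsub_cancel_of_le h
  have h3 := degree_add' α (β - α)
  rw [h2] at h3
  omega

lemma degree_sub_of_le {α β : σ →₀ ℕ} (h : α ≤ β) : (β - α).degree = β.degree - α.degree := by
  have h2 := add_tsub_cancel_of_le h
  have h3 := degree_add' α (β - α)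
  rw [h2] at h3
  omega

lemma eq_of_le_of_degree_eq {α β : σ →₀ ℕ} (h : α ≤ β) (hd : α.degree = β.degree) : α = β := by
  have h2 := add_tsub_cancel_of_le h
  have h3 := degree_add' α (β - α)
  rw [h2] at h3
  have : (β - α).degree = 0 := by omega
  rw [Finsupp.degree_eq_zero_iff] at this
  rw [← h2, this, add_zero]

lemma le_single_iff_eq {α : σ →₀ ℕ} {i : σ} {n : ℕ} (h : α ≤ single i n) :
    α = single i α.degree := by
  have hz : ∀ t, t ≠ i → α t = 0 := by
    intro t ht
    have := h t
    rwa [single_eq_of_ne ht, Nat.le_zero] at this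
  have hd : α.degree = α i := by
    rw [Finsupp.degree_apply]
    rw [Finset.sum_eq_single i (fun b _ hb => hz b hb) (fun hb => (notMem_support_iff.mp hb))]
  ext t
  by_cases ht : t = i
  · subst ht; rw [single_eq_same, hd]
  · rw [hz t ht, single_eq_of_ne ht]

/-- if `f` is killed by contraction by every variable, it is a constant. -/
lemma eq_C_of_cont_X (P : MvPolynomial σ k) (h : ∀ i, cont (X i) P = 0) :
    P = C (coeff 0 P) := by
  apply MvPolynomial.ext
  intro β
  rw [coeff_C]
  by_cases hb : 0 = β
  · rw [if_pos hb, ← hb]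
  · rw [if_neg hb]
    obtain ⟨i, hi⟩ := Finsupp.support_nonempty_iff.mpr (fun hh => hb hh.symm)
    have h1 : single i 1 ≤ β := by
      rw [single_le_iff]
      exact Nat.one_le_iff_ne_zero.mpr (mem_support_iff.mp hi)
    have hX : (X i : MvPolynomial σ k) = monomial (single i 1) 1 := rfl
    have h' := h i
    rw [hX] at h'
    have h2 := cont_monomial_left_coeff (single i 1) (1:k) P (β - single i 1)
    rw [h', coeff_zero, one_mul, add_tsub_cancel_of_le h1] at h2
    exact h2.symm

lemma single_le_of_mem_support {β : σ →₀ ℕ} {i : σ} (hi : i ∈ β.support) :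
    single i 1 ≤ β := by
  rw [single_le_iff]
  exact Nat.one_le_iff_ne_zero.mpr (mem_support_iff.mp hi)



lemma cont_sum_right {k : Type} [Field k] {σ : Type} [DecidableEq σ] {ι : Type} (t : Finset ι)
    (f : MvPolynomial σ k) (g : ι → MvPolynomial σ k) :
    cont f (∑ i ∈ t, g i) = ∑ i ∈ t, cont f (g i) := by
  show contR f (∑ i ∈ t, g i) = _
  rw [map_sum]
  rfl

lemma cont_sub_left {k : Type} [Field k] {σ : Type} [DecidableEq σ]
    (f g h : MvPolynomial σ k) : cont (f - g) h = cont f h - cont g h := by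
  show contL h (f - g) = _
  rw [map_sub]
  rfl

lemma cont_comb {k : Type} [Field k] {σ : Type} [DecidableEq σ] {ι : Type} [Fintype ι]
    (F : MvPolynomial σ k) (c : ι → k) (u : ι → MvPolynomial σ k) :
    cont (∑ t, c t • u t) F = ∑ t, c t • cont (u t) F := by
  have := map_sum (contL F) (fun t => c t • u t) Finset.univ
  simp only [contL_apply] at this
  rw [this]
  exact Finset.sum_congr rfl fun t _ => cont_smul_left _ _ _

section Homog
variable {k : Type} [Field k] {σ : Type} [DecidableEq σ]

lemma cont_eq_zero_of_degrees {f g : MvPolynomial σ k} {m n : ℕ}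
    (hf : f.IsHomogeneous m) (hg : g.IsHomogeneous n) (h : n < m) : cont f g = 0 := by
  apply MvPolynomial.ext
  intro γ
  rw [coeff_cont, coeff_zero]
  refine Finset.sum_eq_zero fun α hα => ?_
  have hα' : α.degree = m := isHomogeneous_iff.mp hf α (MvPolynomial.mem_support_iff.mp hα)
  have : coeff (α + γ) g = 0 := by
    apply hg.coeff_eq_zero
    rw [degree_add']
    omega
  rw [this, mul_zero]

lemma cont_monomial_isHomogeneous {g : MvPolynomial σ k} {n : ℕ} (hg : g.IsHomogeneous n)
    {α : σ →₀ ℕ} (hd : α.degree ≤ n) (c : k) :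
    (cont (monomial α c) g).IsHomogeneous (n - α.degree) := by
  rw [isHomogeneous_iff]
  intro d hcd
  rw [cont_monomial_left_coeff] at hcd
  have h2 : coeff (α + d) g ≠ 0 := fun hh => hcd (by rw [hh, mul_zero])
  have h3 := isHomogeneous_iff.mp hg _ h2
  rw [degree_add'] at h3
  omega

lemma cont_homogeneousComponent {g : MvPolynomial σ k} {n : ℕ} (hg : g.IsHomogeneous n)
    {d : ℕ} (hd : d ≤ n) (f : MvPolynomial σ k) :
    cont (homogeneousComponent d f) g = homogeneousComponent (n - d) (cont f g) := by
  induction f using MvPolynomial.induction_on' with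
  | add p q hp hq => rw [map_add, cont_add_left, hp, hq, cont_add_left, map_add]
  | monomial α c =>
    have hm : (monomial α c : MvPolynomial σ k) ∈ homogeneousSubmodule σ k α.degree :=
      isHomogeneous_monomial c rfl
    rw [homogeneousComponent_of_mem hm]
    by_cases h1 : d = α.degree
    · rw [if_pos h1]
      have hh : (cont (monomial α c) g).IsHomogeneous (n - d) := by
        rw [h1]
        exact cont_monomial_isHomogeneous hg (by omega) c
      rw [homogeneousComponent_of_mem hh, if_pos rfl]
    · rw [if_neg h1, cont_zero_left]
      by_cases h2 : α.degree ≤ n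
      · have hh := cont_monomial_isHomogeneous hg h2 (c := c)
        rw [homogeneousComponent_of_mem hh, if_neg (by omega)]
      · have hz : cont (monomial α c) g = 0 :=
          cont_eq_zero_of_degrees (isHomogeneous_monomial c rfl) hg (by omega)
        rw [hz, map_zero]

end Homog

section Quot

open Finsupp
variable {k : Type} [Field k] {σ : Type} [DecidableEq σ]

noncomputable def annIdeal (F G : MvPolynomial σ k) : Ideal (MvPolynomial σ k) where
  carrier := {f | cont f F = 0 ∧ cont f G = 0}
  add_mem' := fun hf hg => ⟨by rw [cont_add_left, hf.1, hg.1, add_zero],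
    by rw [cont_add_left, hf.2, hg.2, add_zero]⟩
  zero_mem' := ⟨cont_zero_left F, cont_zero_left G⟩
  smul_mem' := fun c f hf => ⟨by rw [smul_eq_mul, cont_mul, hf.1, cont_zero_right],
    by rw [smul_eq_mul, cont_mul, hf.2, cont_zero_right]⟩

lemma mem_annIdeal_iff {F G f : MvPolynomial σ k} :
    f ∈ annIdeal F G ↔ cont f F = 0 ∧ cont f G = 0 := Iff.rfl

lemma annIdeal_homogeneous {F G : MvPolynomial σ k} {e : ℕ}
    (hF : F.IsHomogeneous e) (hG : G.IsHomogeneous e) :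
    ∀ f ∈ annIdeal F G, ∀ d, homogeneousComponent d f ∈ annIdeal F G := by
  intro f hf d
  by_cases hd : d ≤ e
  · exact ⟨by rw [cont_homogeneousComponent hF hd, hf.1, map_zero],
      by rw [cont_homogeneousComponent hG hd, hf.2, map_zero]⟩
  · have hh := homogeneousComponent_isHomogeneous d f
    exact ⟨cont_eq_zero_of_degrees hh hF (by omega),
      cont_eq_zero_of_degrees hh hG (by omega)⟩

lemma mem_annIdeal_of_degree_gt {F G f : MvPolynomial σ k} {e d : ℕ}
    (hF : F.IsHomogeneous e) (hG : G.IsHomogeneous e)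
    (hf : f.IsHomogeneous d) (h : e < d) : f ∈ annIdeal F G :=
  ⟨cont_eq_zero_of_degrees hf hF h, cont_eq_zero_of_degrees hf hG h⟩

variable {r : ℕ} {F G : MvPolynomial (Fin r) k}

lemma hilb_eq_zero_of_gt {e : ℕ} (hF : F.IsHomogeneous e) (hG : G.IsHomogeneous e)
    {d : ℕ} (h : e < d) : hilb k r (annIdeal F G) d = 0 := by
  have : quotPiece k r (annIdeal F G) d = ⊥ := by
    rw [eq_bot_iff]
    rintro x ⟨f, hf, rfl⟩
    simp only [Submodule.mem_bot]
    rw [AlgHom.toLinearMap_apply, Ideal.Quotient.mkₐ_eq_mk,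
      Ideal.Quotient.eq_zero_iff_mem]
    exact mem_annIdeal_of_degree_gt hF hG hf h
  rw [hilb, this, finrank_bot]

lemma quotPiece_eq_span {d : ℕ} {ι : Type} [Fintype ι] (u : ι → MvPolynomial (Fin r) k)
    (hu : ∀ t, (u t).IsHomogeneous d)
    (hspan : ∀ α : Fin r →₀ ℕ, α.degree = d →
      ∃ c : ι → k, (monomial α 1 - ∑ t, c t • u t) ∈ annIdeal F G) :
    quotPiece k r (annIdeal F G) d
      = Submodule.span k (Set.range fun t => Ideal.Quotient.mk (annIdeal F G) (u t)) := by
  apply le_antisymm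
  · rintro x ⟨f, hf, rfl⟩
    have hdecomp : f = ∑ v ∈ f.support, coeff v f • monomial v (1:k) := by
      conv_lhs => rw [← support_sum_monomial_coeff f]
      exact Finset.sum_congr rfl fun v _ => by rw [smul_monomial, smul_eq_mul, mul_one]
    rw [hdecomp, map_sum]
    apply Submodule.sum_mem
    intro v hv
    rw [map_smul]
    apply Submodule.smul_mem
    have hvd : v.degree = d := isHomogeneous_iff.mp hf v (MvPolynomial.mem_support_iff.mp hv)
    obtain ⟨c, hc⟩ := hspan v hvd
    have heq : (Ideal.Quotient.mkₐ k (annIdeal F G)).toLinearMap (monomial v 1)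
        = (Ideal.Quotient.mkₐ k (annIdeal F G)).toLinearMap (∑ t, c t • u t) := by
      simp only [AlgHom.toLinearMap_apply, Ideal.Quotient.mkₐ_eq_mk]
      rw [Ideal.Quotient.mk_eq_mk_iff_sub_mem]
      exact hc
    rw [heq, map_sum]
    apply Submodule.sum_mem
    intro t _
    rw [map_smul]
    apply Submodule.smul_mem
    apply Submodule.subset_span
    exact ⟨t, by rw [AlgHom.toLinearMap_apply, Ideal.Quotient.mkₐ_eq_mk]⟩
  · rw [Submodule.span_le]
    rintro x ⟨t, rfl⟩
    exact ⟨u t, hu t, by rw [AlgHom.toLinearMap_apply, Ideal.Quotient.mkₐ_eq_mk]⟩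

lemma hilb_eq_card {d : ℕ} {ι : Type} [Fintype ι] (u : ι → MvPolynomial (Fin r) k)
    (hu : ∀ t, (u t).IsHomogeneous d)
    (hspan : ∀ α : Fin r →₀ ℕ, α.degree = d →
      ∃ c : ι → k, (monomial α 1 - ∑ t, c t • u t) ∈ annIdeal F G)
    (hind : LinearIndependent k fun t => Ideal.Quotient.mk (annIdeal F G) (u t)) :
    hilb k r (annIdeal F G) d = Fintype.card ι := by
  rw [hilb, quotPiece_eq_span u hu hspan]
  exact finrank_span_eq_card hind

/-- To check independence in the quotient it suffices to check combinations land in `I`. -/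
lemma linearIndependent_mk {ι : Type} [Fintype ι] (u : ι → MvPolynomial (Fin r) k)
    (h : ∀ c : ι → k, (∑ t, c t • u t) ∈ annIdeal F G → ∀ t, c t = 0) :
    LinearIndependent k fun t => Ideal.Quotient.mk (annIdeal F G) (u t) := by
  rw [Fintype.linearIndependent_iff]
  intro c hc
  apply h
  rw [← Ideal.Quotient.eq_zero_iff_mem, map_sum, ← hc]
  refine Finset.sum_congr rfl fun t _ => ?_
  have h2 := map_smul (Ideal.Quotient.mkₐ k (annIdeal F G)) (c t) (u t)
  rw [Ideal.Quotient.mkₐ_eq_mk] at h2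
  exact h2

lemma coeff_sum_smul_monomial {ι : Type} [Fintype ι] (c : ι → k)
    (m : ι → (Fin r →₀ ℕ)) (β : Fin r →₀ ℕ) :
    coeff β (∑ t, c t • monomial (m t) (1:k)) = ∑ t, if m t = β then c t else 0 := by
  rw [coeff_sum]
  exact Finset.sum_congr rfl fun t _ => by
    rw [coeff_smul, coeff_monomial, smul_eq_mul, mul_ite, mul_one, mul_zero]

lemma extract_coeff {ι : Type} [Fintype ι] {c : ι → k} {m : ι → (Fin r →₀ ℕ)}
    {g : MvPolynomial (Fin r) k} (hg : g = ∑ t, c t • monomial (m t) (1:k)) (hg0 : g = 0)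
    (t0 : ι) (huniq : ∀ t, m t = m t0 → t = t0) : c t0 = 0 := by
  have := coeff_sum_smul_monomial c m (m t0)
  rw [← hg, hg0, coeff_zero] at this
  rw [Finset.sum_eq_single t0 (fun t _ ht => if_neg fun hh => ht (huniq t hh))
    (fun ht => absurd (Finset.mem_univ t0) ht), if_pos rfl] at this
  exact this.symm


end Quot

section Exps
variable {r e s : ℕ}


def nxt (hr : 2 ≤ r) (j : Fin r) : Fin r := ⟨((j:ℕ) + 1) % r, Nat.mod_lt _ (by omega)⟩

lemma nxt_val (hr : 2 ≤ r) (j : Fin r) :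
    ((nxt hr j : Fin r) : ℕ) = if (j:ℕ) + 1 = r then 0 else (j:ℕ) + 1 := by
  have hj := j.2
  simp only [nxt]
  split_ifs with h
  · rw [h, Nat.mod_self]
  · exact Nat.mod_eq_of_lt (by omega)

lemma nxt_ne (hr : 2 ≤ r) (j : Fin r) : nxt hr j ≠ j := by
  have h := nxt_val hr j
  have hj := j.2
  intro hh
  rw [hh] at h
  split_ifs at h <;> omega

def zz (hr : 2 ≤ r) : Fin r := ⟨0, by omega⟩
def oo (hr : 2 ≤ r) : Fin r := ⟨1, by omega⟩

variable (e) in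
noncomputable def pE (i : Fin r) : Fin r →₀ ℕ := single i e
variable (e) in
noncomputable def rE (i : Fin r) : Fin r →₀ ℕ := single i (e - 1)
noncomputable def dE (i : Fin r) : Fin r →₀ ℕ := single i 1
variable (e) in
noncomputable def tE (hr : 2 ≤ r) (j : Fin r) : Fin r →₀ ℕ := single j (e - 2) + single (nxt hr j) 1
variable (e) in
noncomputable def bE (hr : 2 ≤ r) (j : Fin r) : Fin r →₀ ℕ := single j (e - 1) + single (nxt hr j) 1

lemma degree_pE (e : ℕ) (i : Fin r) : (pE e i).degree = e := degree_single' i e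
lemma degree_rE (e : ℕ) (i : Fin r) : (rE e i).degree = e - 1 := degree_single' i (e-1)
lemma degree_dE (i : Fin r) : (dE i).degree = 1 := degree_single' i 1
lemma degree_tE (hr : 2 ≤ r) (he : 3 ≤ e) (j : Fin r) : (tE e hr j).degree = e - 1 := by
  rw [tE, degree_add', degree_single', degree_single']; omega
lemma degree_bE (hr : 2 ≤ r) (he : 2 ≤ e) (j : Fin r) : (bE e hr j).degree = e := by
  rw [bE, degree_add', degree_single', degree_single']; omega

lemma pE_sub_dE (he : 2 ≤ e) (i : Fin r) : pE e i - dE i = rE e i := by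
  ext t
  simp only [pE, dE, rE, tsub_apply, single_apply]
  split_ifs <;> omega

lemma pE_sub_rE (he : 2 ≤ e) (i : Fin r) : pE e i - rE e i = dE i := by
  ext t
  simp only [pE, dE, rE, tsub_apply, single_apply]
  split_ifs <;> omega

lemma bE_sub_rE (hr : 2 ≤ r) (he : 2 ≤ e) (j : Fin r) :
    bE e hr j - rE e j = dE (nxt hr j) := by
  have hne : nxt hr j ≠ j := nxt_ne hr j
  ext t
  simp only [bE, rE, dE, tsub_apply, Finsupp.add_apply, single_apply]
  split_ifs with h1 h2 h2 <;> first
    | omega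
    | (exfalso; exact hne (by rw [← h1, ← h2]))
    | skip
  all_goals omega

lemma bE_sub_tE (hr : 2 ≤ r) (he : 3 ≤ e) (j : Fin r) :
    bE e hr j - tE e hr j = dE j := by
  ext t
  simp only [bE, tE, dE, tsub_apply, Finsupp.add_apply, single_apply]
  split_ifs <;> omega

lemma pE_inj (he : 2 ≤ e) {i i' : Fin r} (h : pE e i = pE e i') : i = i' :=
  (single_left_inj (by omega)).mp h
lemma rE_inj (he : 2 ≤ e) {i i' : Fin r} (h : rE e i = rE e i') : i = i' :=
  (single_left_inj (by omega)).mp h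
lemma dE_inj {i i' : Fin r} (h : dE i = dE i') : i = i' :=
  (single_left_inj one_ne_zero).mp h

lemma tE_ne_single (hr : 2 ≤ r) (he : 3 ≤ e) (j : Fin r) (i : Fin r) (m : ℕ) :
    tE e hr j ≠ single i m := by
  intro h
  have h1 := DFunLike.congr_fun h j
  have h2 := DFunLike.congr_fun h (nxt hr j)
  have hne : nxt hr j ≠ j := nxt_ne hr j
  simp only [tE, Finsupp.add_apply, single_apply] at h1 h2
  split_ifs at h1 h2 <;>
    first
      | omega
      | (exfalso; apply hne; omega)
      | (exfalso; apply hne; first | assumption | (apply Fin.ext; omega))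
  all_goals
    simp_all
    omega

lemma bE_ne_single (hr : 2 ≤ r) (he : 2 ≤ e) (j : Fin r) (i : Fin r) (m : ℕ) :
    bE e hr j ≠ single i m := by
  intro h
  have h1 := DFunLike.congr_fun h j
  have h2 := DFunLike.congr_fun h (nxt hr j)
  have hne : nxt hr j ≠ j := nxt_ne hr j
  simp only [bE, Finsupp.add_apply, single_apply] at h1 h2
  split_ifs at h1 h2 <;>
    first
      | omega
      | (exfalso; apply hne; first | assumption | (apply Fin.ext; omega))
  all_goals
    simp_all
    omega

end Exps

section PolyC
variable {k : Type} [Field k] {r e s : ℕ}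

variable {k : Type} [Field k] {r e s : ℕ}

variable (k) in
noncomputable def FF (r e : ℕ) : MvPolynomial (Fin r) k := ∑ i : Fin r, monomial (pE e i) 1
variable (k) in
noncomputable def GG (r e s : ℕ) (hr : 2 ≤ r) : MvPolynomial (Fin r) k :=
  monomial (pE e (zz hr)) 1
    + ∑ j : Fin r, if (j:ℕ) < s then monomial (bE e hr j) 1 else 0

lemma FF_isHomogeneous : (FF k r e).IsHomogeneous e :=
  IsHomogeneous.sum _ _ _ fun i _ => isHomogeneous_monomial _ (degree_pE e i)

lemma GG_isHomogeneous (hr : 2 ≤ r) (he : 2 ≤ e) : (GG k r e s hr).IsHomogeneous e := by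
  refine IsHomogeneous.add (isHomogeneous_monomial _ (degree_pE e _)) ?_
  refine IsHomogeneous.sum _ _ _ fun j _ => ?_
  split_ifs
  · exact isHomogeneous_monomial _ (degree_bE hr he j)
  · exact isHomogeneous_zero _ _ _

/-- Expansion of contraction against `FF`. -/
lemma cont_FF (α : Fin r →₀ ℕ) :
    cont (monomial α (1:k)) (FF k r e)
      = ∑ i : Fin r, if α ≤ pE e i then monomial (pE e i - α) (1:k) else 0 := by
  rw [FF, cont_sum_right]
  exact Finset.sum_congr rfl fun i _ => by rw [cont_monomial, one_mul]

/-- Expansion of contraction against `GG`. -/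
lemma cont_GG (hr : 2 ≤ r) (α : Fin r →₀ ℕ) :
    cont (monomial α (1:k)) (GG k r e s hr)
      = (if α ≤ pE e (zz hr) then monomial (pE e (zz hr) - α) (1:k) else 0)
        + ∑ j : Fin r, if (j:ℕ) < s then
            (if α ≤ bE e hr j then monomial (bE e hr j - α) (1:k) else 0) else 0 := by
  rw [GG, cont_add_right, cont_sum_right, cont_monomial, one_mul]
  congr 1
  refine Finset.sum_congr rfl fun j _ => ?_
  by_cases h : (j:ℕ) < s
  · rw [if_pos h, if_pos h, cont_monomial, one_mul]
  · rw [if_neg h, if_neg h, cont_zero_right]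

lemma le_pE_iff (he : 2 ≤ e) {α : Fin r →₀ ℕ} {d : ℕ} (hd : α.degree = d)
    (h1 : 1 ≤ d) (h2 : d ≤ e) (i : Fin r) : α ≤ pE e i ↔ α = single i d := by
  constructor
  · intro h
    have := le_single_iff_eq h
    rwa [hd] at this
  · rintro rfl
    rw [pE, single_le_iff, single_eq_same]
    exact h2

lemma bE_apply (hr : 2 ≤ r) (j t : Fin r) :
    bE e hr j t = (if j = t then e - 1 else 0) + (if nxt hr j = t then 1 else 0) := by
  rw [bE, Finsupp.add_apply]
  congr 1 <;> rw [single_apply]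

lemma tE_apply (hr : 2 ≤ r) (j t : Fin r) :
    tE e hr j t = (if j = t then e - 2 else 0) + (if nxt hr j = t then 1 else 0) := by
  rw [tE, Finsupp.add_apply]
  congr 1 <;> rw [single_apply]

lemma le_bE_iff (hr : 2 ≤ r) (he : 3 ≤ e) {α : Fin r →₀ ℕ} (hd : α.degree = e - 1)
    (j : Fin r) : α ≤ bE e hr j ↔ (α = rE e j ∨ α = tE e hr j) := by
  have hne : nxt hr j ≠ j := nxt_ne hr j
  constructor
  · intro h
    have hj : α j ≤ e - 1 := by
      have := h j
      rw [bE_apply, if_pos rfl, if_neg hne] at this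
      omega
    have hnj : α (nxt hr j) ≤ 1 := by
      have := h (nxt hr j)
      rw [bE_apply, if_pos rfl, if_neg (fun hh : j = nxt hr j => hne hh.symm)] at this
      omega
    have hz : ∀ t, t ≠ j → t ≠ nxt hr j → α t = 0 := by
      intro t ht1 ht2
      have := h t
      rw [bE_apply, if_neg (fun hh : j = t => ht1 hh.symm),
        if_neg (fun hh : nxt hr j = t => ht2 hh.symm)] at this
      omega
    have hdecomp : α = single j (α j) + single (nxt hr j) (α (nxt hr j)) := by
      ext t
      simp only [Finsupp.add_apply, single_apply]
      by_cases h1 : j = t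
      · subst h1
        rw [if_pos rfl, if_neg hne]
        omega
      · by_cases h2 : nxt hr j = t
        · subst h2
          rw [if_neg h1, if_pos rfl]
          omega
        · rw [if_neg h1, if_neg h2, hz t (fun hh => h1 hh.symm) (fun hh => h2 hh.symm)]
          omega
    have hsum : α j + α (nxt hr j) = e - 1 := by
      have := congrArg Finsupp.degree hdecomp
      rw [hd, degree_add', degree_single', degree_single'] at this
      omega
    by_cases hcase : α (nxt hr j) = 0
    · left
      rw [hdecomp, hcase, single_zero, add_zero, rE]
      congr 1
      omega
    · right
      rw [hdecomp, tE]
      have h1 : α j = e - 2 := by omega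
      have h2 : α (nxt hr j) = 1 := by omega
      rw [h1, h2]
  · rintro (rfl | rfl)
    · intro t
      simp only [rE, bE, Finsupp.add_apply, single_apply]
      split_ifs <;> omega
    · intro t
      simp only [tE, bE, Finsupp.add_apply, single_apply]
      split_ifs <;> omega

lemma tE_uniq (hr : 2 ≤ r) (he : 3 ≤ e) (hrs : r = 2 → e = 3 → s ≤ 1)
    {j j' : Fin r} (hj : (j:ℕ) < s) (hj' : (j':ℕ) < s)
    (h : tE e hr j = tE e hr j') : j = j' := by
  by_contra hne
  have hnej : nxt hr j ≠ j := nxt_ne hr j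
  have hnej' : nxt hr j' ≠ j' := nxt_ne hr j'
  have h1 := DFunLike.congr_fun h j
  have h2 := DFunLike.congr_fun h j'
  rw [tE_apply, tE_apply, if_pos rfl, if_neg hnej,
    if_neg (fun hh : j' = j => hne hh.symm)] at h1
  rw [tE_apply, tE_apply, if_neg hne, if_pos rfl, if_neg hnej'] at h2
  -- h1 : e - 2 + 0 = 0 + (if nxt hr j' = j then 1 else 0)
  -- h2 : 0 + (if nxt hr j = j' then 1 else 0) = e - 2 + 0
  have hb1 : nxt hr j' = j := by
    by_contra hb
    rw [if_neg hb] at h1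
    omega
  have hb2 : nxt hr j = j' := by
    by_contra hb
    rw [if_neg hb] at h2
    omega
  rw [if_pos hb1] at h1
  have he3 : e = 3 := by omega
  have v1 := nxt_val hr j
  have v2 := nxt_val hr j'
  rw [hb2] at v1
  rw [hb1] at v2
  have hr2 : r = 2 := by
    have hjr := j.2
    have hjr' := j'.2
    have hvne : (j:ℕ) ≠ (j':ℕ) := fun hh => hne (Fin.ext hh)
    split_ifs at v1 v2 <;> omega
  have := hrs hr2 he3
  have hvne : (j:ℕ) ≠ (j':ℕ) := fun hh => hne (Fin.ext hh)
  omega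

-- Specific contraction values against FF
lemma cont_rE_FF (he : 2 ≤ e) (i : Fin r) :
    cont (monomial (rE e i) (1:k)) (FF k r e) = monomial (dE i) 1 := by
  rw [cont_FF]
  rw [Finset.sum_eq_single i]
  · rw [if_pos ((le_pE_iff he (degree_rE e i) (by omega) (by omega) i).mpr rfl),
      pE_sub_rE he]
  · intro b _ hb
    rw [if_neg]
    intro hle
    exact hb (rE_inj he ((le_pE_iff he (degree_rE e i) (by omega) (by omega) b).mp hle)).symm
  · intro hh
    exact absurd (Finset.mem_univ i) hh

lemma cont_dE_FF (he : 2 ≤ e) (i : Fin r) :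
    cont (monomial (dE i) (1:k)) (FF k r e) = monomial (rE e i) 1 := by
  rw [cont_FF]
  rw [Finset.sum_eq_single i]
  · rw [if_pos ((le_pE_iff he (degree_dE i) le_rfl (by omega) i).mpr rfl), pE_sub_dE he]
  · intro b _ hb
    rw [if_neg]
    intro hle
    exact hb (dE_inj ((le_pE_iff he (degree_dE i) le_rfl (by omega) b).mp hle)).symm
  · intro hh
    exact absurd (Finset.mem_univ i) hh

lemma cont_tE_FF (hr : 2 ≤ r) (he : 3 ≤ e) (j : Fin r) :
    cont (monomial (tE e hr j) (1:k)) (FF k r e) = 0 := by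
  rw [cont_FF]
  refine Finset.sum_eq_zero fun i _ => ?_
  rw [if_neg]
  intro hle
  exact tE_ne_single hr he j i (e - 1)
    ((le_pE_iff (by omega) (degree_tE hr he j) (by omega) (by omega) i).mp hle)

lemma cont_FF_zero (he : 2 ≤ e) {α : Fin r →₀ ℕ} (hd : α.degree = e - 1)
    (hno : ∀ i, α ≠ rE e i) : cont (monomial α (1:k)) (FF k r e) = 0 := by
  rw [cont_FF]
  refine Finset.sum_eq_zero fun i _ => ?_
  rw [if_neg]
  intro hle
  exact hno i ((le_pE_iff he hd (by omega) (by omega) i).mp hle)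

lemma cont_FF_deg_e (he : 2 ≤ e) {α : Fin r →₀ ℕ} (hd : α.degree = e) :
    cont (monomial α (1:k)) (FF k r e)
      = (∑ i : Fin r, if α = pE e i then (1:k) else 0) • 1 := by
  rw [cont_FF, Finset.sum_smul]
  refine Finset.sum_congr rfl fun i _ => ?_
  rw [ite_smul, one_smul, zero_smul]
  by_cases hh : α ≤ pE e i
  · have heq : α = pE e i := eq_of_le_of_degree_eq hh (by rw [hd, degree_pE])
    rw [if_pos hh, if_pos heq, heq, tsub_self, monomial_zero', C_1]
  · rw [if_neg hh, if_neg (fun heq => hh (le_of_eq heq))]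

lemma cont_pE_FF (he : 2 ≤ e) (i : Fin r) :
    cont (monomial (pE e i) (1:k)) (FF k r e) = 1 := by
  rw [cont_FF]
  rw [Finset.sum_eq_single i]
  · rw [if_pos le_rfl, tsub_self, monomial_zero', C_1]
  · intro b _ hb
    rw [if_neg]
    intro hle
    have : pE e i = pE e b := eq_of_le_of_degree_eq hle (by rw [degree_pE, degree_pE])
    exact hb (pE_inj he this).symm
  · intro hh
    exact absurd (Finset.mem_univ i) hh

lemma zz_ne_oo (hr : 2 ≤ r) : zz hr ≠ oo hr := by
  intro h
  have : (0:ℕ) = 1 := congrArg Fin.val h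
  omega

lemma cont_pEz_GG (hr : 2 ≤ r) (he : 2 ≤ e) :
    cont (monomial (pE e (zz hr)) (1:k)) (GG k r e s hr) = 1 := by
  rw [cont_GG hr, if_pos le_rfl, tsub_self, monomial_zero', C_1]
  rw [Finset.sum_eq_zero, add_zero]
  intro j _
  by_cases hj : (j:ℕ) < s
  · rw [if_pos hj, if_neg]
    intro hle
    have : pE e (zz hr) = bE e hr j :=
      eq_of_le_of_degree_eq hle (by rw [degree_pE, degree_bE hr he])
    exact bE_ne_single hr he j (zz hr) e this.symm
  · rw [if_neg hj]

lemma cont_pEo_GG (hr : 2 ≤ r) (he : 2 ≤ e) :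
    cont (monomial (pE e (oo hr)) (1:k)) (GG k r e s hr) = 0 := by
  rw [cont_GG hr, if_neg, Finset.sum_eq_zero, add_zero]
  · intro j _
    by_cases hj : (j:ℕ) < s
    · rw [if_pos hj, if_neg]
      intro hle
      have : pE e (oo hr) = bE e hr j :=
        eq_of_le_of_degree_eq hle (by rw [degree_pE, degree_bE hr he])
      exact bE_ne_single hr he j (oo hr) e this.symm
    · rw [if_neg hj]
  · intro hle
    have : pE e (oo hr) = pE e (zz hr) :=
      eq_of_le_of_degree_eq hle (by rw [degree_pE, degree_pE])
    exact zz_ne_oo hr (pE_inj he this).symm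

lemma cont_GG_deg_e (hr : 2 ≤ r) (he : 2 ≤ e) {α : Fin r →₀ ℕ} (hd : α.degree = e) :
    cont (monomial α (1:k)) (GG k r e s hr)
      = ((if α = pE e (zz hr) then (1:k) else 0)
          + ∑ j : Fin r, if ((j:ℕ) < s ∧ α = bE e hr j) then (1:k) else 0) • 1 := by
  rw [cont_GG hr, add_smul, Finset.sum_smul]
  congr 1
  · by_cases hh : α ≤ pE e (zz hr)
    · have heq : α = pE e (zz hr) := eq_of_le_of_degree_eq hh (by rw [hd, degree_pE])
      rw [if_pos hh, if_pos heq, heq, tsub_self, monomial_zero', C_1, one_smul]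
    · rw [if_neg hh, if_neg (fun heq => hh (le_of_eq heq)), zero_smul]
  · refine Finset.sum_congr rfl fun j _ => ?_
    by_cases hj : (j:ℕ) < s
    · rw [if_pos hj]
      by_cases hh : α ≤ bE e hr j
      · have heq : α = bE e hr j :=
          eq_of_le_of_degree_eq hh (by rw [hd, degree_bE hr he])
        rw [if_pos hh, if_pos ⟨hj, heq⟩, heq, tsub_self, monomial_zero', C_1, one_smul]
      · rw [if_neg hh, if_neg (fun hc => hh (le_of_eq hc.2)), zero_smul]
    · rw [if_neg hj, if_neg (fun hc => hj hc.1), zero_smul]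

lemma cont_tE_GG (hr : 2 ≤ r) (he3 : 3 ≤ e) (hrs : r = 2 → e = 3 → s ≤ 1)
    {j : Fin r} (hj : (j:ℕ) < s) :
    cont (monomial (tE e hr j) (1:k)) (GG k r e s hr) = monomial (dE j) 1 := by
  rw [cont_GG hr]
  rw [if_neg, Finset.sum_eq_single j, zero_add]
  · rw [if_pos hj, if_pos ((le_bE_iff hr he3 (degree_tE hr he3 j) j).mpr (Or.inr rfl)),
      bE_sub_tE hr he3]
  · intro b _ hb
    by_cases hbs : (b:ℕ) < s
    · rw [if_pos hbs, if_neg]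
      intro hle
      rcases (le_bE_iff hr he3 (degree_tE hr he3 j) b).mp hle with hc | hc
      · exact tE_ne_single hr he3 j b (e-1) hc
      · exact hb (tE_uniq hr he3 hrs hj hbs hc).symm
    · rw [if_neg hbs]
  · intro hh
    exact absurd (Finset.mem_univ j) hh
  · intro hle
    exact tE_ne_single hr he3 j (zz hr) ((tE e hr j).degree) (le_single_iff_eq hle)

lemma cont_GG_zero (hr : 2 ≤ r) (he : 2 ≤ e) (hse : 0 < s → 3 ≤ e)
    {α : Fin r →₀ ℕ} (hd : α.degree = e - 1)
    (hnr : ∀ i, α ≠ rE e i) (hnt : ∀ j : Fin r, (j:ℕ) < s → α ≠ tE e hr j) :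
    cont (monomial α (1:k)) (GG k r e s hr) = 0 := by
  rw [cont_GG hr]
  rw [if_neg, Finset.sum_eq_zero, add_zero]
  · intro j _
    by_cases hj : (j:ℕ) < s
    · have he3 : 3 ≤ e := hse (by omega)
      rw [if_pos hj, if_neg]
      intro hle
      rcases (le_bE_iff hr he3 hd j).mp hle with hc | hc
      · exact hnr j hc
      · exact hnt j hj hc
    · rw [if_neg hj]
  · intro hle
    have := le_single_iff_eq hle
    rw [hd] at this
    exact hnr (zz hr) this


end PolyC

section Assemble
variable {k : Type} [Field k] {r e s : ℕ}

lemma degree_eq_one_exists {σ : Type} [DecidableEq σ] {α : σ →₀ ℕ} (h : α.degree = 1) :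
    ∃ i, α = single i 1 := by
  have hne : α ≠ 0 := fun hh => by rw [hh, map_zero] at h; omega
  obtain ⟨i, hi⟩ := Finsupp.support_nonempty_iff.mpr hne
  have h1 : single i 1 ≤ α := by
    rw [single_le_iff]
    exact Nat.one_le_iff_ne_zero.mpr (mem_support_iff.mp hi)
  have h2 := degree_sub_of_le h1
  rw [h, degree_single'] at h2
  have h3 : α - single i 1 = 0 := by
    rw [← Finsupp.degree_eq_zero_iff, h2, Nat.sub_self]
  have h4 := add_tsub_cancel_of_le h1
  rw [h3, add_zero] at h4
  exact ⟨i, h4.symm⟩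

lemma sum_indicator {ι : Type} [Fintype ι] [DecidableEq ι] {M : Type} [AddCommMonoid M]
    [Module k M] (u : ι → M) (i : ι) :
    (∑ t, (if t = i then (1:k) else 0) • u t) = u i := by
  rw [Finset.sum_eq_single i]
  · rw [if_pos rfl, one_smul]
  · intro b _ hb
    rw [if_neg hb, zero_smul]
  · intro hh
    exact absurd (Finset.mem_univ i) hh

variable {F G : MvPolynomial (Fin r) k}

lemma hspan_of_eq {ι : Type} [Fintype ι] [DecidableEq ι] {u : ι → MvPolynomial (Fin r) k}
    {α : Fin r →₀ ℕ} (i : ι) (h : monomial α (1:k) = u i) :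
    ∃ c : ι → k, (monomial α 1 - ∑ t, c t • u t) ∈ annIdeal F G := by
  refine ⟨fun t => if t = i then 1 else 0, ?_⟩
  rw [sum_indicator u i, h, sub_self]
  exact Submodule.zero_mem _

lemma hspan_of_mem {ι : Type} [Fintype ι] {u : ι → MvPolynomial (Fin r) k}
    {α : Fin r →₀ ℕ} (h : monomial α (1:k) ∈ annIdeal F G) :
    ∃ c : ι → k, (monomial α 1 - ∑ t, c t • u t) ∈ annIdeal F G := by
  refine ⟨fun _ => 0, ?_⟩
  simp only [zero_smul, Finset.sum_const_zero, sub_zero]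
  exact h

noncomputable def emb (hsr : s ≤ r) (j : Fin s) : Fin r := ⟨j.1, by omega⟩

lemma hilb_one (hr : 2 ≤ r) (he : 2 ≤ e) :
    hilb k r (annIdeal (FF k r e) (GG k r e s hr)) 1 = r := by
  rw [hilb_eq_card (fun i : Fin r => monomial (dE i) (1:k))
    (fun i => isHomogeneous_monomial _ (degree_dE i))
    (fun α hα => by
      obtain ⟨i, rfl⟩ := degree_eq_one_exists hα
      exact hspan_of_eq i rfl)
    (linearIndependent_mk _ (fun c hmem => by
      have hF := hmem.1
      rw [cont_comb] at hF
      rw [show (∑ t : Fin r, c t • cont (monomial (dE t) (1:k)) (FF k r e))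
          = ∑ t : Fin r, c t • monomial (rE e t) (1:k) from
        Finset.sum_congr rfl fun t _ => by rw [cont_dE_FF he]] at hF
      exact fun t => extract_coeff rfl hF t (fun t' hh => rE_inj he hh))),
    Fintype.card_fin]

lemma hilb_e_eq (hr : 2 ≤ r) (he : 2 ≤ e) :
    hilb k r (annIdeal (FF k r e) (GG k r e s hr)) e = 2 := by
  rw [hilb_eq_card (fun t : Fin 2 => monomial (pE e (if t = 0 then zz hr else oo hr)) (1:k))
    (fun t => isHomogeneous_monomial _ (degree_pE e _))
    (fun α hα => by
      refine ⟨![(if α = pE e (zz hr) then (1:k) else 0)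
          + ∑ j : Fin r, if ((j:ℕ) < s ∧ α = bE e hr j) then (1:k) else 0,
          (∑ i : Fin r, if α = pE e i then (1:k) else 0)
          - ((if α = pE e (zz hr) then (1:k) else 0)
          + ∑ j : Fin r, if ((j:ℕ) < s ∧ α = bE e hr j) then (1:k) else 0)], ?_⟩
      rw [Fin.sum_univ_two]
      simp only [Matrix.cons_val_zero, Matrix.cons_val_one, Matrix.head_cons,
        if_pos rfl, if_neg (one_ne_zero : (1 : Fin 2) ≠ 0), if_true]
      constructor
      · rw [cont_sub_left, cont_FF_deg_e he hα, cont_add_left, cont_smul_left,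
          cont_smul_left, cont_pE_FF he, cont_pE_FF he, ← add_smul]
        rw [show ((if α = pE e (zz hr) then (1:k) else 0)
            + ∑ j : Fin r, if ((j:ℕ) < s ∧ α = bE e hr j) then (1:k) else 0)
            + ((∑ i : Fin r, if α = pE e i then (1:k) else 0)
            - ((if α = pE e (zz hr) then (1:k) else 0)
            + ∑ j : Fin r, if ((j:ℕ) < s ∧ α = bE e hr j) then (1:k) else 0))
            = ∑ i : Fin r, if α = pE e i then (1:k) else 0 from by ring, sub_self]
      · rw [cont_sub_left, cont_GG_deg_e hr he hα, cont_add_left, cont_smul_left,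
          cont_smul_left, cont_pEz_GG hr he, cont_pEo_GG hr he, smul_zero, add_zero,
          sub_self])
    (linearIndependent_mk _ (fun c hmem => by
      have hF := hmem.1
      have hG := hmem.2
      rw [cont_comb, Fin.sum_univ_two] at hF hG
      simp only [if_pos rfl, if_neg (one_ne_zero : (1 : Fin 2) ≠ 0), if_true] at hF hG
      rw [cont_pE_FF he, cont_pE_FF he] at hF
      rw [cont_pEz_GG hr he, cont_pEo_GG hr he, smul_zero, add_zero] at hG
      have h0 : c 0 = 0 := by
        rcases smul_eq_zero.mp hG with h | h
        · exact h
        · exact absurd h one_ne_zero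
      rw [h0, zero_smul, zero_add] at hF
      have h1 : c 1 = 0 := by
        rcases smul_eq_zero.mp hF with h | h
        · exact h
        · exact absurd h one_ne_zero
      intro t
      refine Fin.cases h0 (fun i => ?_) t
      have : i = 0 := Subsingleton.elim _ _
      rw [this]
      exact h1))]
  rfl

lemma hilb_em1 (hr : 2 ≤ r) (he : 2 ≤ e) (hsr : s ≤ r) (hse : 0 < s → 3 ≤ e)
    (hrs : r = 2 → e = 3 → s ≤ 1) :
    hilb k r (annIdeal (FF k r e) (GG k r e s hr)) (e - 1) = r + s := by
  rw [hilb_eq_card (Sum.elim (fun i : Fin r => monomial (rE e i) (1:k))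
      (fun j : Fin s => monomial (tE e hr (emb hsr j)) (1:k)))
    (fun t => by
      rcases t with i | j
      · exact isHomogeneous_monomial _ (degree_rE e i)
      · exact isHomogeneous_monomial _
          (degree_tE hr (hse (by have := j.2; omega)) (emb hsr j)))
    (fun α hα => by
      by_cases h1 : ∃ i, α = rE e i
      · obtain ⟨i, rfl⟩ := h1
        exact hspan_of_eq (Sum.inl i) rfl
      by_cases h2 : ∃ j : Fin r, (j:ℕ) < s ∧ α = tE e hr j
      · obtain ⟨j, hj, rfl⟩ := h2
        refine hspan_of_eq (Sum.inr ⟨(j:ℕ), hj⟩) ?_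
        have : emb hsr ⟨(j:ℕ), hj⟩ = j := Fin.ext rfl
        rw [Sum.elim_inr, this]
      · exact hspan_of_mem ⟨cont_FF_zero he hα (fun i hh => h1 ⟨i, hh⟩),
          cont_GG_zero hr he hse hα (fun i hh => h1 ⟨i, hh⟩)
            (fun j hj hh => h2 ⟨j, hj, hh⟩)⟩)
    (linearIndependent_mk _ (fun c hmem => by
      have hF := hmem.1
      have hG := hmem.2
      rw [cont_comb, Fintype.sum_sum_type] at hF hG
      simp only [Sum.elim_inl, Sum.elim_inr] at hF hG
      rw [show (∑ i : Fin r, c (Sum.inl i) • cont (monomial (rE e i) (1:k)) (FF k r e))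
          = ∑ i : Fin r, c (Sum.inl i) • monomial (dE i) (1:k) from
            Finset.sum_congr rfl fun i _ => by rw [cont_rE_FF he],
        show (∑ j : Fin s, c (Sum.inr j) •
            cont (monomial (tE e hr (emb hsr j)) (1:k)) (FF k r e)) = 0 from
          Finset.sum_eq_zero fun j _ => by
            rw [cont_tE_FF hr (hse (by have := j.2; omega)), smul_zero],
        add_zero] at hF
      have hinl : ∀ i, c (Sum.inl i) = 0 :=
        fun i => extract_coeff rfl hF i (fun i' hh => dE_inj hh)
      rw [show (∑ i : Fin r, c (Sum.inl i) • cont (monomial (rE e i) (1:k)) (GG k r e s hr))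
          = 0 from Finset.sum_eq_zero fun i _ => by rw [hinl i, zero_smul],
        show (∑ j : Fin s, c (Sum.inr j) •
            cont (monomial (tE e hr (emb hsr j)) (1:k)) (GG k r e s hr))
          = ∑ j : Fin s, c (Sum.inr j) • monomial (dE (emb hsr j)) (1:k) from
          Finset.sum_congr rfl fun j _ => by
            rw [cont_tE_GG hr (hse (by have := j.2; omega)) hrs
              (by exact j.2 : ((emb hsr j : Fin r) : ℕ) < s)],
        zero_add] at hG
      have hinr : ∀ j, c (Sum.inr j) = 0 := fun j =>
        extract_coeff rfl hG j (fun j' hh => by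
          have h3 := dE_inj hh
          have h4 : (emb hsr j' : ℕ) = (emb hsr j : ℕ) := congrArg Fin.val h3
          exact Fin.ext (show (j' : ℕ) = (j : ℕ) from h4))
      intro t
      rcases t with i | j
      · exact hinl i
      · exact hinr j))]
  rw [Fintype.card_sum, Fintype.card_fin, Fintype.card_fin]

lemma socle_eq (hr : 2 ≤ r) (he : 2 ≤ e) :
    {x : MvPolynomial (Fin r) k ⧸ annIdeal (FF k r e) (GG k r e s hr) |
        ∀ i, x * Ideal.Quotient.mk (annIdeal (FF k r e) (GG k r e s hr)) (X i) = 0}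
      = (quotPiece k r (annIdeal (FF k r e) (GG k r e s hr)) e :
          Set (MvPolynomial (Fin r) k ⧸ annIdeal (FF k r e) (GG k r e s hr))) := by
  apply Set.Subset.antisymm
  · intro x hx
    obtain ⟨f, rfl⟩ := Ideal.Quotient.mk_surjective x
    have hXF : ∀ i, cont (X i) (cont f (FF k r e)) = 0 := by
      intro i
      have h1 := hx i
      rw [← map_mul, Ideal.Quotient.eq_zero_iff_mem] at h1
      have h2 := h1.1
      rwa [mul_comm, cont_mul] at h2
    have hXG : ∀ i, cont (X i) (cont f (GG k r e s hr)) = 0 := by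
      intro i
      have h1 := hx i
      rw [← map_mul, Ideal.Quotient.eq_zero_iff_mem] at h1
      have h2 := h1.2
      rwa [mul_comm, cont_mul] at h2
    have hc1 := eq_C_of_cont_X _ hXF
    have hc2 := eq_C_of_cont_X _ hXG
    set c1 := coeff 0 (cont f (FF k r e)) with hc1def
    set c2 := coeff 0 (cont f (GG k r e s hr)) with hc2def
    set f' := c2 • monomial (pE e (zz hr)) (1:k) + (c1 - c2) • monomial (pE e (oo hr)) (1:k)
      with hf'def
    have hCsmul : ∀ c : k, c • (1 : MvPolynomial (Fin r) k) = C c := by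
      intro c
      rw [smul_eq_C_mul, mul_one]
    have hmem : f - f' ∈ annIdeal (FF k r e) (GG k r e s hr) := by
      constructor
      · rw [cont_sub_left, hc1, hf'def, cont_add_left, cont_smul_left, cont_smul_left,
          cont_pE_FF he, cont_pE_FF he, ← add_smul,
          show c2 + (c1 - c2) = c1 from by ring, hCsmul, sub_self]
      · rw [cont_sub_left, hc2, hf'def, cont_add_left, cont_smul_left, cont_smul_left,
          cont_pEz_GG hr he, cont_pEo_GG hr he, smul_zero, add_zero, hCsmul, sub_self]
    refine ⟨f', ?_, ?_⟩
    · refine Submodule.add_mem _ (Submodule.smul_mem _ _ ?_) (Submodule.smul_mem _ _ ?_)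
      · exact isHomogeneous_monomial _ (degree_pE e _)
      · exact isHomogeneous_monomial _ (degree_pE e _)
    · rw [AlgHom.toLinearMap_apply, Ideal.Quotient.mkₐ_eq_mk]
      exact ((Ideal.Quotient.mk_eq_mk_iff_sub_mem f f').mpr hmem).symm
  · rintro x ⟨f', hf', rfl⟩
    intro i
    rw [AlgHom.toLinearMap_apply, Ideal.Quotient.mkₐ_eq_mk, ← map_mul,
      Ideal.Quotient.eq_zero_iff_mem]
    exact mem_annIdeal_of_degree_gt FF_isHomogeneous (GG_isHomogeneous hr he)
      (hf'.mul (isHomogeneous_X k i)) (by omega)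

end Assemble
end Stmt3Aux

/-- Theorem 3.3 i), existence: for all `r ≥ 2`, `e ≥ 2` and `r ≤ a ≤ 2r` with
`a ≤ C(r+e-2, e-1)`, there is a level algebra of type 2, codimension `r` and socle degree `e`
whose `h`-vector has next-to-last entry `h_{e-1} = a`. -/
theorem stmt3 (k : Type) [Field k] [CharZero k] (r e a : ℕ)
    (hr : 2 ≤ r) (he : 2 ≤ e) (hra : r ≤ a) (ha2r : a ≤ 2 * r)
    (hadim : a ≤ (r + e - 2).choose (e - 1)) :
    ∃ I : Ideal (MvPolynomial (Fin r) k),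
      IsLevelQuot k r e 2 I ∧ hilb k r I 1 = r ∧ hilb k r I (e - 1) = a := by
  set s := a - r with hsdef
  have hsr : s ≤ r := by omega
  have hse : 0 < s → 3 ≤ e := by
    intro hs
    by_contra hh
    have he2 : e = 2 := by omega
    rw [he2] at hadim
    have : (r + 2 - 2).choose (2 - 1) = r := by
      have : r + 2 - 2 = r := by omega
      rw [this]
      exact Nat.choose_one_right r
    rw [this] at hadim
    omega
  have hrs : r = 2 → e = 3 → s ≤ 1 := by
    intro h2 h3
    rw [h2, h3] at hadim
    have : (2 + 3 - 2).choose (3 - 1) = 3 := by decide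
    rw [this] at hadim
    omega
  refine ⟨Stmt3Aux.annIdeal (Stmt3Aux.FF k r e) (Stmt3Aux.GG k r e s hr),
    ⟨?_, ?_, ?_, ?_⟩, ?_, ?_⟩
  · exact Stmt3Aux.annIdeal_homogeneous Stmt3Aux.FF_isHomogeneous
      (Stmt3Aux.GG_isHomogeneous hr he)
  · exact fun d hd => Stmt3Aux.hilb_eq_zero_of_gt Stmt3Aux.FF_isHomogeneous
      (Stmt3Aux.GG_isHomogeneous hr he) hd
  · exact Stmt3Aux.hilb_e_eq hr he
  · exact Stmt3Aux.socle_eq hr he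
  · exact Stmt3Aux.hilb_one hr he
  · rw [Stmt3Aux.hilb_em1 hr he hsr hse hrs]
    omega
end

section
/- Let r, i and a be integers with i ≥ 1 and 2 ≤ r ≤ a ≤ 2r. Then the maximum of C(r_1−1+i, i) + C(r_2−1+i, i) over all pairs of integers (r_1, r_2) with 1 ≤ r_1, r_2 ≤ r and r_1 + r_2 = a is equal to C(r−2+i, i) + 1 if a = r, and is equal to C(r−1+i, i) + C(a−r−1+i, i) if r < a ≤ 2r. -/
/-!
`n ↦ C(n + i, i)` is convex: by Pascal's rule its increment at `n` is `C(n + i, i - 1)` (for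
`i ≥ 1`), which grows with `n`. Hence, among pairs of naturals with a fixed sum and confined to
an interval, `C(x + i, i) + C(y + i, i)` is largest when the pair is as spread out as the
interval allows: one part at the upper end `r` (or `r - 1` when `a = r`, the other part being at
least `1`) and the other taking the rest.
-/

namespace Nat

theorem choose_succ_add_add_choose_le (i : ℕ) {j k : ℕ} (h : j ≤ k) :
    (j + 1 + i).choose i + (k + i).choose i ≤ (j + i).choose i + (k + 1 + i).choose i := by
  cases i with
  | zero => simp
  | succ m =>
    have hj : (j + 1 + (m + 1)).choose (m + 1) =
        (j + m + 1).choose m + (j + (m + 1)).choose (m + 1) := by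
      rw [show j + 1 + (m + 1) = j + m + 1 + 1 by omega, choose_succ_succ, ← add_assoc]
    have hk : (k + 1 + (m + 1)).choose (m + 1) =
        (k + m + 1).choose m + (k + (m + 1)).choose (m + 1) := by
      rw [show k + 1 + (m + 1) = k + m + 1 + 1 by omega, choose_succ_succ, ← add_assoc]
    have hmono : (j + m + 1).choose m ≤ (k + m + 1).choose m := choose_le_choose m (by omega)
    omega

theorem choose_add_add_choose_le (i d : ℕ) {j k : ℕ} (h : j ≤ k) :
    (j + d + i).choose i + (k + i).choose i ≤ (j + i).choose i + (k + d + i).choose i := by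
  induction d with
  | zero => rfl
  | succ d ih =>
    have step := choose_succ_add_add_choose_le i (show j + d ≤ k + d by omega)
    rw [← add_assoc j, ← add_assoc k]
    omega

theorem choose_add_choose_le_of_add_eq (i : ℕ) {x y j k : ℕ} (hsum : x + y = j + k)
    (hjx : j ≤ x) (hjy : j ≤ y) :
    (x + i).choose i + (y + i).choose i ≤ (j + i).choose i + (k + i).choose i := by
  wlog hxy : x ≤ y generalizing x y
  · rw [add_comm ((x + i).choose i)]
    exact this (by omega) hjy hjx (by omega)
  have := choose_add_add_choose_le i (x - j) (show j ≤ y by omega)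
  rwa [Nat.add_sub_cancel' hjx, show y + (x - j) = k by omega] at this

end Nat

def choosePairSums (r i a : ℕ) : Set ℕ :=
  {s | ∃ r1 r2 : ℕ, 1 ≤ r1 ∧ r1 ≤ r ∧ 1 ≤ r2 ∧ r2 ≤ r ∧ r1 + r2 = a ∧
    s = (r1 - 1 + i).choose i + (r2 - 1 + i).choose i}

/-- Every admissible part exceeds `j`, so no admissible pair is more spread out than
`(k + 1, j + 1)`. -/
theorem isGreatest_choosePairSums (r i a j k : ℕ) (hsum : j + k + 2 = a) (hjk : j ≤ k)
    (hk : k < r) (hj : j = 0 ∨ j + r < a) :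
    IsGreatest (choosePairSums r i a) ((j + i).choose i + (k + i).choose i) := by
  refine ⟨⟨k + 1, j + 1, by omega, hk, by omega, by omega, by omega, ?_⟩, ?_⟩
  · simp only [Nat.add_sub_cancel, add_comm ((j + i).choose i)]
  · rintro s ⟨r1, r2, h1, h1r, h2, h2r, hsum', rfl⟩
    exact Nat.choose_add_choose_le_of_add_eq i (by omega) (by omega) (by omega)

theorem stmt5_general (r i a : ℕ) (hr : 2 ≤ r) (ha : a ≤ 2 * r) :
    (a = r → IsGreatest
      {s : ℕ | ∃ r1 r2 : ℕ, 1 ≤ r1 ∧ r1 ≤ r ∧ 1 ≤ r2 ∧ r2 ≤ r ∧ r1 + r2 = a ∧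
        s = (r1 - 1 + i).choose i + (r2 - 1 + i).choose i}
      ((r - 2 + i).choose i + 1)) ∧
    (r < a → IsGreatest
      {s : ℕ | ∃ r1 r2 : ℕ, 1 ≤ r1 ∧ r1 ≤ r ∧ 1 ≤ r2 ∧ r2 ≤ r ∧ r1 + r2 = a ∧
        s = (r1 - 1 + i).choose i + (r2 - 1 + i).choose i}
      ((r - 1 + i).choose i + (a - r - 1 + i).choose i)) := by
  refine ⟨fun har => ?_, fun har => ?_⟩
  · have := isGreatest_choosePairSums r i a 0 (r - 2) (by omega) (Nat.zero_le _) (by omega)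
      (Or.inl rfl)
    rwa [zero_add, Nat.choose_self, add_comm] at this
  · have := isGreatest_choosePairSums r i a (a - r - 1) (r - 1) (by omega) (by omega) (by omega)
      (by omega)
    rwa [add_comm] at this

/-- Lemma 3.4: for integers `i ≥ 1` and `2 ≤ r ≤ a ≤ 2r`, the maximum of
`C(r₁-1+i, i) + C(r₂-1+i, i)` over pairs `1 ≤ r₁, r₂ ≤ r` with `r₁ + r₂ = a` equals
`C(r-2+i, i) + 1` if `a = r`, and `C(r-1+i, i) + C(a-r-1+i, i)` if `r < a ≤ 2r`. -/
theorem stmt5 (r i a : ℕ) (hi : 1 ≤ i) (hr : 2 ≤ r) (hra : r ≤ a) (ha : a ≤ 2 * r) :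
    (a = r → IsGreatest
      {s : ℕ | ∃ r1 r2 : ℕ, 1 ≤ r1 ∧ r1 ≤ r ∧ 1 ≤ r2 ∧ r2 ≤ r ∧ r1 + r2 = a ∧
        s = (r1 - 1 + i).choose i + (r2 - 1 + i).choose i}
      ((r - 2 + i).choose i + 1)) ∧
    (r < a → IsGreatest
      {s : ℕ | ∃ r1 r2 : ℕ, 1 ≤ r1 ∧ r1 ≤ r ∧ 1 ≤ r2 ∧ r2 ≤ r ∧ r1 + r2 = a ∧
        s = (r1 - 1 + i).choose i + (r2 - 1 + i).choose i}
      ((r - 1 + i).choose i + (a - r - 1 + i).choose i)) :=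
  stmt5_general r i a hr ha
end

section
/- Let A be a level standard graded artinian algebra of type 2, codimension r and socle degree e ≥ 3 over k, with h-vector (1, r, …, h_{e-2}, h_{e-1}, 2), and suppose a := h_{e-1} > r. Then h_{e-2} ≤ min{ C(r+1,2) + C(a−r+1,2), C(r+e−3, e−2) }. -/
open MvPolynomial

set_option maxHeartbeats 1600000
set_option synthInstance.maxHeartbeats 400000




lemma choose_step (r a : ℕ) (h : a ≤ 2*r) :
    (r+1).choose 2 + (a - r + 1).choose 2 ≤ (r+2).choose 2 + (a - (r+1) + 1).choose 2 := by
  have h1 : (r+2).choose 2 = (r+1).choose 1 + (r+1).choose 2 := Nat.choose_succ_succ (r+1) 1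
  rw [Nat.choose_one_right] at h1
  rcases le_or_gt a r with har | har
  · have e1 : a - r = 0 := by omega
    have e2 : a - (r+1) = 0 := by omega
    rw [e1, e2]
    omega
  · have h2 : a - r + 1 = (a - (r+1) + 1) + 1 := by omega
    rw [h2]
    have h3 : (a - (r+1) + 1 + 1).choose 2
        = (a - (r+1) + 1).choose 1 + (a - (r+1) + 1).choose 2 :=
      Nat.choose_succ_succ _ 1
    rw [h3, Nat.choose_one_right]
    have : a - (r+1) + 1 ≤ r + 1 := by omega
    omega

lemma choose_convex {m a : ℕ} (ha : a ≤ 2*m) :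
    ∀ {r}, m ≤ r →
    (m+1).choose 2 + (a - m + 1).choose 2 ≤ (r+1).choose 2 + (a - r + 1).choose 2 := by
  intro r
  induction r with
  | zero => intro h; interval_cases m; exact le_rfl
  | succ n ih =>
    intro h
    rcases Nat.lt_or_ge m (n+1) with h' | h'
    · have hmn : m ≤ n := by omega
      refine (ih hmn).trans ?_
      exact choose_step n a (by omega)
    · have : m = n + 1 := by omega
      subst this; exact le_rfl

section SymMat
open Matrix


lemma card_pairs_le (n : ℕ) :
    Fintype.card {p : Fin n × Fin n // p.1 ≤ p.2} = (n+1).choose 2 := by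
  classical
  rw [← Fintype.card_congr (Sym2.sortEquiv (α := Fin n)), ← Finset.card_univ,
    ← Finset.sym2_univ, Finset.card_sym2, Finset.card_univ, Fintype.card_fin]
lemma finrank_symmatrix_le {k : Type} [Field k] {n : ℕ}
    (R' : Submodule k (Fin n → k))
    (MS : Submodule k (Matrix (Fin n) (Fin n) k))
    (hsym : ∀ M ∈ MS, M.transpose = M)
    (hrow : ∀ M (hM : M ∈ MS), ∀ i, M i ∈ R') :
    Module.finrank k MS ≤ (Module.finrank k R' + 1).choose 2 := by
  classical
  set m := Module.finrank k R' with hm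
  let b : Module.Basis (Fin m) k R' := Module.finBasis k R'
  set V : Matrix (Fin m) (Fin n) k := fun i => (b i : Fin n → k) with hV
  -- V-transpose as linear map is injective
  have hVc : ∀ c : Fin m → k, Matrix.toLin' (Vᵀ) c = ∑ i, c i • (b i : Fin n → k) := by
    intro c
    funext j
    simp [Matrix.toLin'_apply, Matrix.mulVec, dotProduct, Matrix.transpose, hV,
      Finset.sum_apply, mul_comm]
  have hli : LinearIndependent k (fun i => (b i : Fin n → k)) :=
    b.linearIndependent.map' R'.subtype R'.ker_subtype
  have hinj : LinearMap.ker (Matrix.toLin' (Vᵀ)) = ⊥ := by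
    rw [LinearMap.ker_eq_bot']
    intro c hc
    have h0 : ∑ i, c i • (b i : Fin n → k) = 0 := by rw [← hVc]; exact hc
    funext i
    exact Fintype.linearIndependent_iff.mp hli c h0 i
  obtain ⟨g, hg⟩ := (Matrix.toLin' (Vᵀ)).exists_leftInverse_of_injective hinj
  set L : Matrix (Fin m) (Fin n) k := LinearMap.toMatrix' g with hL
  have hLV : L * Vᵀ = 1 := by
    have := congrArg LinearMap.toMatrix' hg
    rwa [LinearMap.toMatrix'_comp, LinearMap.toMatrix'_toLin', LinearMap.toMatrix'_id] at this
  have hVL : V * Lᵀ = 1 := by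
    have := congrArg Matrix.transpose hLV
    simpa [Matrix.transpose_mul] using this
  -- reconstruction
  have hrec : ∀ M (hM : M ∈ MS), Vᵀ * (L * M * Lᵀ) * V = M := by
    intro M hM
    set A : Matrix (Fin n) (Fin m) k := fun i j => b.repr ⟨M i, hrow M hM i⟩ j with hA
    have hAV : M = A * V := by
      funext i l
      rw [Matrix.mul_apply]
      have := congrArg (fun x : R' => (x : Fin n → k) l) (b.sum_repr ⟨M i, hrow M hM i⟩)
      simp only [Submodule.coe_sum, Submodule.coe_smul, Finset.sum_apply, Pi.smul_apply,
        smul_eq_mul] at this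
      exact this.symm
    have hMT : M = Vᵀ * Aᵀ := by
      conv_lhs => rw [← hsym M hM, hAV]
      rw [Matrix.transpose_mul]
    have key1 : L * M * Lᵀ = L * A := by
      rw [hAV, ← Matrix.mul_assoc, Matrix.mul_assoc (L*A) V Lᵀ, hVL, Matrix.mul_one]
    rw [key1, ← Matrix.mul_assoc, Matrix.mul_assoc (Vᵀ * L) A V, ← hAV,
      hMT, ← Matrix.mul_assoc, Matrix.mul_assoc Vᵀ L Vᵀ, hLV, Matrix.mul_one]
  -- the conjugation map
  let T : Matrix (Fin n) (Fin n) k →ₗ[k] Matrix (Fin m) (Fin m) k :=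
    { toFun := fun M => L * M * Lᵀ
      map_add' := by
        intro x y
        show L * (x + y) * Lᵀ = L * x * Lᵀ + L * y * Lᵀ
        rw [Matrix.mul_add, Matrix.add_mul]
      map_smul' := by
        intro c x
        show L * (c • x) * Lᵀ = c • (L * x * Lᵀ)
        rw [Matrix.mul_smul, Matrix.smul_mul] }
  let E : Matrix (Fin m) (Fin m) k →ₗ[k] ({p : Fin m × Fin m // p.1 ≤ p.2} → k) :=
    LinearMap.pi fun p => (LinearMap.proj p.1.2).comp (LinearMap.proj (R := k)
      (φ := fun _ : Fin m => Fin m → k) p.1.1)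
  let G : MS →ₗ[k] ({p : Fin m × Fin m // p.1 ≤ p.2} → k) :=
    E.comp (T.comp MS.subtype)
  have hGinj : Function.Injective G := by
    rw [← LinearMap.ker_eq_bot (f := G), LinearMap.ker_eq_bot']
    intro x hx
    have hTsym : (T (x : Matrix (Fin n) (Fin n) k)).transpose = T x := by
      show (L * (x:Matrix (Fin n) (Fin n) k) * Lᵀ)ᵀ = _
      rw [Matrix.transpose_mul, Matrix.transpose_mul, Matrix.transpose_transpose,
        hsym _ x.2, ← Matrix.mul_assoc]
      rfl
    have hT0 : T (x : Matrix (Fin n) (Fin n) k) = 0 := by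
      funext i j
      rcases le_total i j with hij | hij
      · exact congrFun hx ⟨(i, j), hij⟩
      · have := congrFun hx ⟨(j, i), hij⟩
        have h2 : (T (x:Matrix (Fin n) (Fin n) k)) j i = 0 := this
        calc (T (x:Matrix (Fin n) (Fin n) k)) i j
            = (T (x:Matrix (Fin n) (Fin n) k))ᵀ j i := rfl
          _ = (T (x:Matrix (Fin n) (Fin n) k)) j i := by rw [hTsym]
          _ = 0 := h2
    have : (x : Matrix (Fin n) (Fin n) k) = 0 := by
      have := hrec x x.2
      rw [show L * (x:Matrix (Fin n) (Fin n) k) * Lᵀ = T x from rfl, hT0] at this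
      simpa using this.symm
    exact Subtype.ext this
  calc Module.finrank k MS ≤ Module.finrank k ({p : Fin m × Fin m // p.1 ≤ p.2} → k) :=
        LinearMap.finrank_le_finrank_of_injective hGinj
    _ = (m + 1).choose 2 := by
        rw [Module.finrank_pi]
        exact card_pairs_le m

end SymMat


section QP
variable {k : Type} [Field k] {r : ℕ} {I : Ideal (MvPolynomial (Fin r) k)}

lemma quotPiece_mul {d d' : ℕ} {x y : MvPolynomial (Fin r) k ⧸ I}
    (hx : x ∈ quotPiece k r I d) (hy : y ∈ quotPiece k r I d') :
    x * y ∈ quotPiece k r I (d + d') := by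
  obtain ⟨p, hp, rfl⟩ := hx
  obtain ⟨q, hq, rfl⟩ := hy
  exact ⟨p * q, IsHomogeneous.mul hp hq, by simp [map_mul]⟩

lemma mk_X_mem_quotPiece (i : Fin r) :
    Ideal.Quotient.mk I (X i) ∈ quotPiece k r I 1 :=
  ⟨X i, isHomogeneous_X k i, rfl⟩

lemma quotPiece_disjoint (hI : ∀ f ∈ I, ∀ d, homogeneousComponent d f ∈ I)
    {d d' : ℕ} (hne : d ≠ d') {x : MvPolynomial (Fin r) k ⧸ I}
    (hx : x ∈ quotPiece k r I d) (hx' : x ∈ quotPiece k r I d') : x = 0 := by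
  obtain ⟨p, hp, rfl⟩ := hx
  obtain ⟨q, hq, hqe⟩ := hx'
  have hsub : q - p ∈ I := by
    rw [← Ideal.Quotient.mk_eq_mk_iff_sub_mem]
    simpa [Ideal.Quotient.mkₐ_eq_mk] using hqe
  have h2 := hI _ hsub d
  rw [map_sub, homogeneousComponent_of_mem hq, homogeneousComponent_of_mem hp,
    if_neg hne, if_pos rfl, zero_sub, neg_mem_iff] at h2
  show Ideal.Quotient.mkₐ k I p = 0
  rw [Ideal.Quotient.mkₐ_eq_mk, Ideal.Quotient.eq_zero_iff_mem]
  exact h2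

lemma quotPiece_le_span (d : ℕ) :
    quotPiece k r I d ≤ Submodule.span k
      (Set.range (fun m : Sym (Fin r) d =>
        Ideal.Quotient.mk I (monomial (Multiset.toFinsupp (m : Multiset (Fin r))) 1))) := by
  classical
  rw [quotPiece, homogeneousSubmodule_eq_finsupp_supported, AddMonoidAlgebra.supported_eq_span_single,
    Submodule.map_span]
  refine Submodule.span_le.mpr ?_
  rintro _ ⟨_, ⟨σ, hσ, rfl⟩, rfl⟩
  have hcard : Multiset.card σ.toMultiset = d := by
    rw [Finsupp.card_toMultiset]
    exact hσ
  refine Submodule.subset_span ?_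
  refine ⟨⟨σ.toMultiset, hcard⟩, ?_⟩
  simp [Finsupp.toMultiset_toFinsupp, single_eq_monomial, Ideal.Quotient.mkₐ_eq_mk]

lemma quotPiece_fd (d : ℕ) : FiniteDimensional k (quotPiece k r I d) :=
  haveI : FiniteDimensional k (Submodule.span k
      (Set.range (fun m : Sym (Fin r) d =>
        Ideal.Quotient.mk I (monomial (Multiset.toFinsupp (m : Multiset (Fin r))) 1)))) :=
    FiniteDimensional.span_of_finite k (Set.finite_range _)
  Submodule.finiteDimensional_of_le (quotPiece_le_span d)

lemma hilb_le (d : ℕ) : hilb k r I d ≤ (r + d - 1).choose d := by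
  classical
  haveI : FiniteDimensional k (Submodule.span k
      (Set.range (fun m : Sym (Fin r) d =>
        Ideal.Quotient.mk I (monomial (Multiset.toFinsupp (m : Multiset (Fin r))) 1)))) :=
    FiniteDimensional.span_of_finite k (Set.finite_range _)
  have h1 : hilb k r I d ≤ Module.finrank k (Submodule.span k
      (Set.range (fun m : Sym (Fin r) d =>
        Ideal.Quotient.mk I (monomial (Multiset.toFinsupp (m : Multiset (Fin r))) 1)))) :=
    Submodule.finrank_mono (quotPiece_le_span d)
  refine h1.trans ?_
  refine (finrank_range_le_card _).trans ?_
  rw [Sym.card_sym_eq_choose, Fintype.card_fin]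

end QP


section Half
open Matrix
noncomputable def psiMap (k : Type) [Field k] (r : ℕ) (I : Ideal (MvPolynomial (Fin r) k))
    (d : ℕ) (nu : (MvPolynomial (Fin r) k ⧸ I) →ₗ[k] k) :
    ↥(quotPiece k r I d) →ₗ[k] (Fin r → k) :=
  LinearMap.pi fun i => nu ∘ₗ (LinearMap.mulRight k (Ideal.Quotient.mk I (X i))) ∘ₗ
    (quotPiece k r I d).subtype

noncomputable def qMap (k : Type) [Field k] (r : ℕ) (I : Ideal (MvPolynomial (Fin r) k))
    (d : ℕ) (nu : (MvPolynomial (Fin r) k ⧸ I) →ₗ[k] k) :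
    ↥(quotPiece k r I d) →ₗ[k] Matrix (Fin r) (Fin r) k :=
  LinearMap.pi fun i => LinearMap.pi fun j =>
    nu ∘ₗ (LinearMap.mulRight k (Ideal.Quotient.mk I (X j))) ∘ₗ
      (LinearMap.mulRight k (Ideal.Quotient.mk I (X i))) ∘ₗ (quotPiece k r I d).subtype

lemma half {k : Type} [Field k] {r e : ℕ} {I : Ideal (MvPolynomial (Fin r) k)}
    (he : 3 ≤ e)
    (hhom : ∀ f ∈ I, ∀ d, homogeneousComponent d f ∈ I)
    (hsoc : {a : MvPolynomial (Fin r) k ⧸ I | ∀ i, a * Ideal.Quotient.mk I (X i) = 0} =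
      (quotPiece k r I e : Set (MvPolynomial (Fin r) k ⧸ I)))
    (lam mu : (MvPolynomial (Fin r) k ⧸ I) →ₗ[k] k)
    (hsep : ∀ x ∈ quotPiece k r I e, lam x = 0 → mu x = 0 → x = 0) :
    hilb k r I (e-2) ≤
      (Module.finrank k (LinearMap.range (psiMap k r I (e-1) lam)) + 1).choose 2
      + (hilb k r I (e-1)
          - Module.finrank k (LinearMap.range (psiMap k r I (e-1) lam)) + 1).choose 2
    ∧ hilb k r I (e-1) ≤ Module.finrank k (LinearMap.range (psiMap k r I (e-1) lam))
      + Module.finrank k (LinearMap.range (psiMap k r I (e-1) mu)) := by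
  classical
  haveI : FiniteDimensional k (quotPiece k r I (e-1)) := quotPiece_fd _
  haveI : FiniteDimensional k (quotPiece k r I (e-2)) := quotPiece_fd _
  set A := MvPolynomial (Fin r) k ⧸ I
  set xv : Fin r → A := fun i => Ideal.Quotient.mk I (X i) with hxv
  have hee1 : e - 1 + 1 = e := by omega
  have hee2 : e - 2 + 1 = e - 1 := by omega
  have hxW : ∀ (w : A), w ∈ quotPiece k r I (e-1) → ∀ i, w * xv i ∈ quotPiece k r I e := by
    intro w hw i
    have := quotPiece_mul hw (mk_X_mem_quotPiece i)
    rwa [hee1] at this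
  have hxU : ∀ (u : A), u ∈ quotPiece k r I (e-2) → ∀ i, u * xv i ∈ quotPiece k r I (e-1) := by
    intro u hu i
    have := quotPiece_mul hu (mk_X_mem_quotPiece i)
    rwa [hee2] at this
  have hXsoc : ∀ x : A, (∀ i, x * xv i = 0) → x ∈ quotPiece k r I e := by
    intro x h
    exact SetLike.mem_coe.mp ((Set.ext_iff.mp hsoc x).mp h)
  have X1 : ∀ x : A, x ∈ quotPiece k r I (e-1) → (∀ i, x * xv i = 0) → x = 0 := by
    intro x hx h
    exact quotPiece_disjoint hhom (show e - 1 ≠ e by omega) hx (hXsoc x h)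
  have X2 : ∀ x : A, x ∈ quotPiece k r I (e-2) → (∀ i, x * xv i = 0) → x = 0 := by
    intro x hx h
    exact quotPiece_disjoint hhom (show e - 2 ≠ e by omega) hx (hXsoc x h)
  have hpsi : ∀ (nu : A →ₗ[k] k) (w : ↥(quotPiece k r I (e-1))) (i : Fin r),
      psiMap k r I (e-1) nu w i = nu ((w : A) * xv i) := fun _ _ _ => rfl
  have hq : ∀ (nu : A →ₗ[k] k) (u : ↥(quotPiece k r I (e-2))) (i j : Fin r),
      qMap k r I (e-2) nu u i j = nu ((u : A) * xv i * xv j) := fun _ _ _ _ => rfl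
  set ψl := psiMap k r I (e-1) lam with hψl
  set ψm := psiMap k r I (e-1) mu with hψm
  set m := Module.finrank k (LinearMap.range ψl) with hmdef
  -- part 2
  have hker_inf : LinearMap.ker ψl ⊓ LinearMap.ker ψm = ⊥ := by
    rw [eq_bot_iff]
    intro w hw
    rw [Submodule.mem_inf] at hw
    obtain ⟨h1, h2⟩ := hw
    rw [LinearMap.mem_ker] at h1 h2
    have hz : ∀ i, (w : A) * xv i = 0 := by
      intro i
      refine hsep _ (hxW _ w.2 i) ?_ ?_
      · rw [← hpsi lam w i, h1]; rfl
      · rw [← hpsi mu w i, h2]; rfl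
    have : (w : A) = 0 := X1 _ w.2 hz
    simpa using Subtype.ext this
  have hrn1 := LinearMap.finrank_range_add_finrank_ker ψl
  have hrn2 := LinearMap.finrank_range_add_finrank_ker ψm
  have hsuple : Module.finrank k ↥(LinearMap.ker ψl ⊔ LinearMap.ker ψm)
      ≤ Module.finrank k (quotPiece k r I (e-1)) := Submodule.finrank_le _
  have hdims := Submodule.finrank_sup_add_finrank_inf_eq (LinearMap.ker ψl) (LinearMap.ker ψm)
  rw [hker_inf, finrank_bot, add_zero] at hdims
  have part2 : hilb k r I (e-1) ≤ m
      + Module.finrank k (LinearMap.range ψm) := by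
    show Module.finrank k (quotPiece k r I (e-1)) ≤ _
    omega
  -- part 1
  set Ql := qMap k r I (e-2) lam with hQl
  set Qm := qMap k r I (e-2) mu with hQm
  have hrowQ : ∀ (nu : A →ₗ[k] k) (u : ↥(quotPiece k r I (e-2))) (i : Fin r),
      qMap k r I (e-2) nu u i = psiMap k r I (e-1) nu ⟨(u : A) * xv i, hxU _ u.2 i⟩ := by
    intro nu u i; funext j; rfl
  have hsymQ : ∀ (nu : A →ₗ[k] k) (u : ↥(quotPiece k r I (e-2))),
      (qMap k r I (e-2) nu u).transpose = qMap k r I (e-2) nu u := by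
    intro nu u
    funext i j
    show nu ((u : A) * xv j * xv i) = nu ((u : A) * xv i * xv j)
    congr 1
    ring
  have hrange : Module.finrank k (LinearMap.range Ql) ≤ (m + 1).choose 2 := by
    refine finrank_symmatrix_le (LinearMap.range ψl) _ ?_ ?_
    · rintro M ⟨u, rfl⟩; exact hsymQ lam u
    · rintro M ⟨u, rfl⟩ i
      exact ⟨⟨(u : A) * xv i, hxU _ u.2 i⟩, (hrowQ lam u i).symm⟩
  -- kernel part
  set f := Qm.comp (LinearMap.ker Ql).subtype with hf
  have hfinj : Function.Injective f := by
    rw [injective_iff_map_eq_zero]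
    intro u hu
    have hu1 : Ql u.1 = 0 := u.2
    have hz : ∀ i j, ((u : ↥(quotPiece k r I (e-2))) : A) * xv i * xv j = 0 := by
      intro i j
      refine hsep _ ?_ ?_ ?_
      · have := quotPiece_mul (hxU _ (u : ↥(quotPiece k r I (e-2))).2 i) (mk_X_mem_quotPiece j)
        rwa [hee1] at this
      · rw [← hq lam u.1 i j, hu1]; rfl
      · have : Qm u.1 = 0 := hu
        rw [← hq mu u.1 i j, this]; rfl
    have h1 : ∀ i, ((u : ↥(quotPiece k r I (e-2))) : A) * xv i = 0 := by
      intro i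
      exact X1 _ (hxU _ (u : ↥(quotPiece k r I (e-2))).2 i) (fun j => hz i j)
    have h0 : ((u : ↥(quotPiece k r I (e-2))) : A) = 0 :=
      X2 _ (u : ↥(quotPiece k r I (e-2))).2 h1
    exact Subtype.ext (Subtype.ext h0)
  have hkerval : Module.finrank k (LinearMap.ker Ql) = Module.finrank k (LinearMap.range f) :=
    (LinearMap.finrank_range_of_inj hfinj).symm
  have hrangef : Module.finrank k (LinearMap.range f)
      ≤ (Module.finrank k (Submodule.map ψm (LinearMap.ker ψl)) + 1).choose 2 := by
    refine finrank_symmatrix_le (Submodule.map ψm (LinearMap.ker ψl)) _ ?_ ?_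
    · rintro M ⟨u, rfl⟩; exact hsymQ mu u.1
    · rintro M ⟨u, rfl⟩ i
      refine ⟨⟨(u.1 : A) * xv i, hxU _ u.1.2 i⟩, ?_, (hrowQ mu u.1 i).symm⟩
      simp only [SetLike.mem_coe, LinearMap.mem_ker]
      funext j
      rw [hpsi lam _ j]
      have hu1 : Ql u.1 = 0 := u.2
      rw [← hq lam u.1 i j, hu1]
      rfl
  have hmaple : Module.finrank k (Submodule.map ψm (LinearMap.ker ψl))
      ≤ Module.finrank k (LinearMap.ker ψl) := Submodule.finrank_map_le ψm _
  have hrnQ := LinearMap.finrank_range_add_finrank_ker Ql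
  have part1 : hilb k r I (e-2) ≤ (m + 1).choose 2 + (hilb k r I (e-1) - m + 1).choose 2 := by
    have hkerb : Module.finrank k (LinearMap.ker Ql) ≤ (hilb k r I (e-1) - m + 1).choose 2 := by
      rw [hkerval]
      refine hrangef.trans (Nat.choose_le_choose 2 ?_)
      have : Module.finrank k (LinearMap.ker ψl) = hilb k r I (e-1) - m := by
        show _ = Module.finrank k (quotPiece k r I (e-1)) - m
        omega
      omega
    show Module.finrank k (quotPiece k r I (e-2)) ≤ _
    omega
  exact ⟨part1, part2⟩

end Half

/-- Theorem 3.5 ii), upper bound: for a level algebra of type 2, codimension `r` and socle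
degree `e ≥ 3` whose `h`-vector satisfies `a := h_{e-1} > r`, one has
`h_{e-2} ≤ min (C(r+1,2) + C(a-r+1,2)) (C(r+e-3, e-2))`. -/
theorem stmt8 (k : Type) [Field k] [CharZero k] (r e a : ℕ) (hr : 1 ≤ r) (he : 3 ≤ e)
    (I : Ideal (MvPolynomial (Fin r) k))
    (hI : IsLevelQuot k r e 2 I) (hcodim : hilb k r I 1 = r)
    (hadef : hilb k r I (e - 1) = a) (har : r < a) :
    hilb k r I (e - 2) ≤
      min ((r + 1).choose 2 + (a - r + 1).choose 2) ((r + e - 3).choose (e - 2)) := by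
  classical
  obtain ⟨hhom, hvan, hIe, hsoc⟩ := hI
  refine le_min ?_ ?_
  swap
  · have h := hilb_le (k := k) (r := r) (I := I) (e - 2)
    have heq : r + (e - 2) - 1 = r + e - 3 := by omega
    rwa [heq] at h
  haveI : FiniteDimensional k (quotPiece k r I e) := quotPiece_fd e
  obtain ⟨S', hS'⟩ := Submodule.exists_isCompl (quotPiece k r I e)
  set pr := (quotPiece k r I e).projectionOnto S' hS' with hprdef
  have h2 : Module.finrank k (quotPiece k r I e) = 2 := hIe
  set bS := (Module.finBasis k (quotPiece k r I e)).reindex (finCongr h2) with hbS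
  set lam := (bS.coord 0) ∘ₗ pr with hlam
  set mu := (bS.coord 1) ∘ₗ pr with hmu
  have hsep : ∀ x ∈ quotPiece k r I e, lam x = 0 → mu x = 0 → x = 0 := by
    intro x hx h0 h1
    have hpr : pr x = ⟨x, hx⟩ :=
      Submodule.projectionOnto_apply_left hS' ⟨x, hx⟩
    have hz : (⟨x, hx⟩ : quotPiece k r I e) = 0 := by
      rw [← Module.Basis.forall_coord_eq_zero_iff bS]
      intro i
      fin_cases i
      · rw [← hpr]; exact h0
      · rw [← hpr]; exact h1
    exact congrArg Subtype.val hz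
  set m0 := Module.finrank k (LinearMap.range (psiMap k r I (e-1) lam)) with hm0
  set m1 := Module.finrank k (LinearMap.range (psiMap k r I (e-1) mu)) with hm1
  have hm0r : m0 ≤ r := by
    have h := Submodule.finrank_le (LinearMap.range (psiMap k r I (e-1) lam))
    rwa [Module.finrank_pi, Fintype.card_fin] at h
  have hm1r : m1 ≤ r := by
    have h := Submodule.finrank_le (LinearMap.range (psiMap k r I (e-1) mu))
    rwa [Module.finrank_pi, Fintype.card_fin] at h
  rcases le_total m1 m0 with hcmp | hcmp
  · obtain ⟨p1, p2⟩ := half he hhom hsoc lam mu hsep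
    rw [hadef] at p1 p2
    exact p1.trans (choose_convex (by omega) hm0r)
  · obtain ⟨p1, p2⟩ := half he hhom hsoc mu lam (fun x hx ha hb => hsep x hx hb ha)
    rw [hadef] at p1 p2
    exact p1.trans (choose_convex (by omega) hm1r)
end
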